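/- arXiv:2302.14571 — 11 statements merged into one kernel-verified Lean document; each statement's English description precedes it below -/
import Mathlib

section
/- If φ : R → R is a multiplicative automorphism of R, then φ(e₁) + φ(e₂) = 1, where e₁ = e and e₂ = 1 − e. -/
theorem stmt2 {R : Type*} [Ring R] (e : R) (he : e * e = e) (he0 : e ≠ 0) (he1 : e ≠ 1)
(φ : R → R) (hbij : Function.Bijective φ) (hmul : ∀ a b : R, φ (a * b) = φ a * φ b)
    : φ e + φ (1 - e) = 1 := by
  have h1 : φ 1 = 1 := by
    obtain ⟨o, ho⟩ := hbij.2 1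
    have h := hmul o 1
    rw [mul_one, ho] at h
    exact (h.trans (one_mul _)).symm
  have h0 : φ 0 = 0 := by
    obtain ⟨z, hz⟩ := hbij.2 0
    have h := hmul 0 z
    rw [zero_mul, hz, mul_zero] at h
    exact h
  have hee' : e * (1 - e) = 0 := by rw [mul_sub, mul_one, he, sub_self]
  have he'e : (1 - e) * e = 0 := by rw [sub_mul, one_mul, he, sub_self]
  have hfg : φ e * φ (1 - e) = 0 := by rw [← hmul, hee', h0]
  have hgf : φ (1 - e) * φ e = 0 := by rw [← hmul, he'e, h0]
  have hff : φ e * φ e = φ e := by rw [← hmul, he]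
  have hgg : φ (1 - e) * φ (1 - e) = φ (1 - e) := by
    rw [← hmul]; congr 1; rw [mul_sub, mul_one, sub_mul, one_mul, he]; noncomm_ring
  obtain ⟨s, hs⟩ := hbij.2 (φ e + φ (1 - e))
  have hes : e * s = e := by
    apply hbij.1
    rw [hmul, hs, mul_add, hff, hfg, add_zero]
  have he's : (1 - e) * s = 1 - e := by
    apply hbij.1
    rw [hmul, hs, mul_add, hgf, hgg, zero_add]
  have hs1 : s = 1 := by
    have : e * s + (1 - e) * s = s := by noncomm_ring
    rw [hes, he's] at this
    simpa using this.symm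
  rw [hs1, h1] at hs
  exact hs.symm
end

section
/- Let φ be a multiplicative automorphism of R satisfying condition (A). Then for all a₁₁ ∈ R₁₁ and b₁₂ ∈ R₁₂, φ(a₁₁ + b₁₂) = φ(a₁₁) + φ(b₁₂). -/
theorem stmt3 {R : Type*} [Ring R] (e : R) (he : e * e = e) (he0 : e ≠ 0) (he1 : e ≠ 1)
(φ : R → R) (hbij : Function.Bijective φ) (hmul : ∀ a b : R, φ (a * b) = φ a * φ b)
(E : Fin 2 → R) (hE0 : E 0 = e) (hE1 : E 1 = 1 - e)
(hA : ∀ (i j : Fin 2) (a : R), (∀ (k : Fin 2) (x : R), (E i * a * E j) * (E j * x * E k) = 0) → E i * a * E j = 0)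
    : ∀ a b : R,
      φ (e * a * e + e * b * (1 - e)) = φ (e * a * e) + φ (e * b * (1 - e)) := by
  intro a b
  set A := e * a * e with hAdef
  set B := e * b * (1 - e) with hBdef
  -- φ 0 = 0
  have h0 : φ 0 = 0 := by
    obtain ⟨x, hx⟩ := hbij.2 0
    have := hmul x 0
    rw [mul_zero, hx, zero_mul] at this
    exact this
  have h1e : (1 - e) * e = 0 := by
    rw [sub_mul, one_mul, he, sub_self]
  have he1e : e * (1 - e) = 0 := by
    rw [mul_sub, mul_one, he, sub_self]
  have hEidem : ∀ j : Fin 2, E j * E j = E j := by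
    intro j
    have hj : j = 0 ∨ j = 1 := by omega
    rcases hj with rfl | rfl
    · rw [hE0]; exact he
    · rw [hE1, mul_sub, mul_one, h1e, sub_zero]
  obtain ⟨s, hs⟩ := hbij.2 (φ A + φ B)
  -- key: s acts like A + B on every Peirce component
  have key : ∀ (j k : Fin 2) (x : R), s * (E j * x * E k) = (A + B) * (E j * x * E k) := by
    intro j k x
    set y := E j * x * E k with hy
    have hmain : φ (s * y) = φ (A * y) + φ (B * y) := by
      rw [hmul, hs, add_mul, ← hmul, ← hmul]
    have hj : j = 0 ∨ j = 1 := by omega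
    rcases hj with rfl | rfl
    · -- j = 0 : B * y = 0
      have hBy : B * y = 0 := by
        have : B * y = e * b * ((1 - e) * e) * (x * E k) := by
          rw [hy, hE0, hBdef]; noncomm_ring
        rw [this, h1e, mul_zero, zero_mul]
      rw [hBy, h0, add_zero] at hmain
      have := hbij.1 hmain
      rw [this, add_mul, hBy, add_zero]
    · -- j = 1 : A * y = 0
      have hAy : A * y = 0 := by
        have : A * y = e * a * (e * (1 - e)) * (x * E k) := by
          rw [hy, hE1, hAdef]; noncomm_ring
        rw [this, he1e, mul_zero, zero_mul]
      rw [hAy, h0, zero_add] at hmain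
      have := hbij.1 hmain
      rw [this, add_mul, hAy, zero_add]
  set d := s - (A + B) with hd
  have hdkill : ∀ (j k : Fin 2) (x : R), d * (E j * x * E k) = 0 := by
    intro j k x
    rw [hd, sub_mul, key, sub_self]
  have hcomp : ∀ (i j : Fin 2), E i * d * E j = 0 := by
    intro i j
    apply hA i j
    intro k x
    have hre : (E i * d * E j) * (E j * x * E k) = E i * (d * ((E j * E j) * x * E k)) := by
      noncomm_ring
    rw [hre, hEidem j, hdkill j k x, mul_zero]
  have hone : E 0 + E 1 = 1 := by rw [hE0, hE1]; abel
  have hdz : d = 0 := by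
    have hexp : (E 0 + E 1) * d * (E 0 + E 1) =
        E 0 * d * E 0 + E 0 * d * E 1 + (E 1 * d * E 0 + E 1 * d * E 1) := by
      noncomm_ring
    rw [hone, one_mul, mul_one] at hexp
    rw [hexp, hcomp 0 0, hcomp 0 1, hcomp 1 0, hcomp 1 1]
    simp
  have hsAB : s = A + B := by
    have := sub_eq_zero.mp hdz
    exact this
  rw [← hsAB, hs]
end

section
/- Let φ be a multiplicative automorphism of R. Then for all a₁₁ ∈ R₁₁ and b₂₁ ∈ R₂₁, φ(a₁₁ + b₂₁) = φ(a₁₁) + φ(b₂₁), assuming φ(a₁₁+b₁₂) = φ(a₁₁)+φ(b₁₂) and φ(a₂₂+b₂₁) = φ(a₂₂)+φ(b₂₁) hold for all entries (as established under condition (A)). -/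
theorem stmt4 {R : Type*} [Ring R] (e : R) (he : e * e = e) (he0 : e ≠ 0) (he1 : e ≠ 1)
(φ : R → R) (hbij : Function.Bijective φ) (hmul : ∀ a b : R, φ (a * b) = φ a * φ b)
    (h1 : ∀ a b : R, φ (e * a * e + e * b * (1 - e)) = φ (e * a * e) + φ (e * b * (1 - e)))
    (h2 : ∀ a b : R, φ ((1 - e) * a * (1 - e) + (1 - e) * b * e)
        = φ ((1 - e) * a * (1 - e)) + φ ((1 - e) * b * e))
    : ∀ a b : R,
      φ (e * a * e + (1 - e) * b * e) = φ (e * a * e) + φ ((1 - e) * b * e) := by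
  intro a b
  set A := e * a * e with hA
  set B := (1 - e) * b * e with hB
  -- φ 0 = 0
  obtain ⟨z, hz⟩ := hbij.2 (0 : R)
  have h0 : φ 0 = 0 := by
    have := hmul 0 z
    rwa [zero_mul, hz, mul_zero] at this
  -- pick c with φ c = φ A + φ B
  obtain ⟨c, hc⟩ := hbij.2 (φ A + φ B)
  have hfe : (1 - e) * e = 0 := by rw [sub_mul, one_mul, he, sub_self]
  have hef : e * (1 - e) = 0 := by rw [mul_sub, mul_one, he, sub_self]
  have heA : e * A = A := by
    rw [hA, ← mul_assoc, ← mul_assoc, he]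
  have heB : e * B = 0 := by
    rw [hB, ← mul_assoc, ← mul_assoc, hef, zero_mul, zero_mul]
  have hfA : (1 - e) * A = 0 := by
    rw [hA, ← mul_assoc, ← mul_assoc, hfe, zero_mul, zero_mul]
  have hfB : (1 - e) * B = B := by
    have h : (1 - e) * (1 - e) = 1 - e := by rw [mul_sub, mul_one, hfe, sub_zero]
    rw [hB, ← mul_assoc, ← mul_assoc, h]
  have hec : e * c = A := by
    apply hbij.1
    rw [hmul, hc, mul_add, ← hmul, ← hmul, heA, heB, h0, add_zero]
  have hfc : (1 - e) * c = B := by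
    apply hbij.1
    rw [hmul, hc, mul_add, ← hmul, ← hmul, hfA, hfB, h0, zero_add]
  have hcab : c = A + B := by
    have : c = e * c + (1 - e) * c := by noncomm_ring
    rw [this, hec, hfc]
  rw [← hcab, hc]
end

section
/- Let φ be a multiplicative automorphism of a ring R satisfying condition (A). Then for all a₁₂, b₁₂ ∈ R₁₂, φ(a₁₂ + b₁₂) = φ(a₁₂) + φ(b₁₂); similarly for all a₂₁, b₂₁ ∈ R₂₁, φ(a₂₁ + b₂₁) = φ(a₂₁) + φ(b₂₁). -/
private lemma myadd {R : Type*} [Ring R] {φ : R → R}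
    (hbij : Function.Bijective φ) (hmul : ∀ a b : R, φ (a * b) = φ a * φ b)
    (f : R) (hf : f * f = f) (a b : R) :
    φ (f * a * (1 - f) + f * b * (1 - f)) = φ (f * a * (1 - f)) + φ (f * b * (1 - f)) := by
  set A := f * a * (1 - f) with hA
  set B := f * b * (1 - f) with hB
  -- basic idempotent facts
  have hpf : (1 - f) * f = 0 := by rw [sub_mul, one_mul, hf, sub_self]
  have hfp : f * (1 - f) = 0 := by rw [mul_sub, mul_one, hf, sub_self]
  have hpp : (1 - f) * (1 - f) = 1 - f := by rw [sub_mul, one_mul, mul_sub, mul_one, hf]; abel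
  have hfA : f * A = A := by rw [hA, ← mul_assoc, ← mul_assoc, hf]
  have hfB : f * B = B := by rw [hB, ← mul_assoc, ← mul_assoc, hf]
  have hAp : A * (1 - f) = A := by rw [hA, mul_assoc, hpp]
  have hAf : A * f = 0 := by rw [hA, mul_assoc, hpf, mul_zero]
  have hpB : (1 - f) * B = 0 := by rw [hB, ← mul_assoc, ← mul_assoc, hpf, zero_mul, zero_mul]
  have hAB : A * B = 0 := by
    rw [hB, ← mul_assoc, ← mul_assoc, hAf, zero_mul, zero_mul]
  -- φ 0 = 0
  obtain ⟨z, hz⟩ := hbij.2 0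
  have h0 : φ 0 = 0 := by
    have := hmul 0 z
    rwa [zero_mul, hz, mul_zero] at this
  -- Lemma A : φ (f + A) = φ f + φ A
  have lemA : φ (f + A) = φ f + φ A := by
    obtain ⟨c, hc⟩ := hbij.2 (φ f + φ A)
    have h1 : c * f = f := by
      apply hbij.1
      rw [hmul, hc, add_mul, ← hmul, ← hmul, hf, hAf, h0, add_zero]
    have h2 : c * (1 - f) = A := by
      apply hbij.1
      rw [hmul, hc, add_mul, ← hmul, ← hmul, hfp, hAp, h0, zero_add]
    have hcfa : c = f + A := by
      have : c = c * f + c * (1 - f) := by noncomm_ring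
      rw [this, h1, h2]
    rw [← hcfa, hc]
  -- Lemma B : φ (B + (1 - f)) = φ B + φ (1 - f)
  have lemB : φ (B + (1 - f)) = φ B + φ (1 - f) := by
    obtain ⟨c, hc⟩ := hbij.2 (φ B + φ (1 - f))
    have h1 : f * c = B := by
      apply hbij.1
      rw [hmul, hc, mul_add, ← hmul, ← hmul, hfB, hfp, h0, add_zero]
    have h2 : (1 - f) * c = 1 - f := by
      apply hbij.1
      rw [hmul, hc, mul_add, ← hmul, ← hmul, hpB, hpp, h0, zero_add]
    have hcfb : c = B + (1 - f) := by
      have : c = f * c + (1 - f) * c := by noncomm_ring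
      rw [this, h1, h2]
    rw [← hcfb, hc]
  -- key factorization : (f + A) * (B + (1 - f)) = A + B
  have key : (f + A) * (B + (1 - f)) = A + B := by
    have expand : (f + A) * (B + (1 - f))
        = f * B + f * (1 - f) + (A * B + A * (1 - f)) := by noncomm_ring
    rw [expand, hfB, hfp, hAB, hAp, add_zero, zero_add]
    exact add_comm B A
  calc φ (A + B) = φ ((f + A) * (B + (1 - f))) := by rw [key]
    _ = φ (f + A) * φ (B + (1 - f)) := hmul _ _
    _ = (φ f + φ A) * (φ B + φ (1 - f)) := by rw [lemA, lemB]
    _ = φ f * φ B + φ f * φ (1 - f) + (φ A * φ B + φ A * φ (1 - f)) := by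
        rw [add_mul, mul_add, mul_add]
    _ = φ (f * B) + φ (f * (1 - f)) + (φ (A * B) + φ (A * (1 - f))) := by
        rw [hmul f B, hmul f (1 - f), hmul A B, hmul A (1 - f)]
    _ = φ B + 0 + (0 + φ A) := by rw [hfB, hfp, hAB, hAp, h0]
    _ = φ A + φ B := by rw [add_zero, zero_add, add_comm]

theorem stmt5 {R : Type*} [Ring R] (e : R) (he : e * e = e) (he0 : e ≠ 0) (he1 : e ≠ 1)
(φ : R → R) (hbij : Function.Bijective φ) (hmul : ∀ a b : R, φ (a * b) = φ a * φ b)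
(E : Fin 2 → R) (hE0 : E 0 = e) (hE1 : E 1 = 1 - e)
(hA : ∀ (i j : Fin 2) (a : R), (∀ (k : Fin 2) (x : R), (E i * a * E j) * (E j * x * E k) = 0) → E i * a * E j = 0)
    : (∀ a b : R,
        φ (e * a * (1 - e) + e * b * (1 - e)) = φ (e * a * (1 - e)) + φ (e * b * (1 - e))) ∧
      (∀ a b : R,
        φ ((1 - e) * a * e + (1 - e) * b * e) = φ ((1 - e) * a * e) + φ ((1 - e) * b * e)) := by
  constructor
  · intro a b
    exact myadd hbij hmul e he a b
  · intro a b
    have hf2 : (1 - e) * (1 - e) = 1 - e := by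
      rw [sub_mul, one_mul, mul_sub, mul_one, he]; abel
    have h := myadd hbij hmul (1 - e) hf2 a b
    rwa [sub_sub_cancel] at h
end

section
/- Let φ be a multiplicative automorphism of a ring R satisfying condition (A). Then for all a₁₁ ∈ R₁₁, b₁₂ ∈ R₁₂, c₂₁ ∈ R₂₁, d₂₂ ∈ R₂₂, φ(a₁₁ + b₁₂ + c₂₁ + d₂₂) = φ(a₁₁) + φ(b₁₂) + φ(c₂₁) + φ(d₂₂). -/
theorem stmt7 {R : Type*} [Ring R] (e : R) (he : e * e = e) (he0 : e ≠ 0) (he1 : e ≠ 1)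
(φ : R → R) (hbij : Function.Bijective φ) (hmul : ∀ a b : R, φ (a * b) = φ a * φ b)
(E : Fin 2 → R) (hE0 : E 0 = e) (hE1 : E 1 = 1 - e)
(hA : ∀ (i j : Fin 2) (a : R), (∀ (k : Fin 2) (x : R), (E i * a * E j) * (E j * x * E k) = 0) → E i * a * E j = 0)
    : ∀ a b c d : R,
      φ (e * a * e + e * b * (1 - e) + (1 - e) * c * e + (1 - e) * d * (1 - e))
        = φ (e * a * e) + φ (e * b * (1 - e)) + φ ((1 - e) * c * e) + φ ((1 - e) * d * (1 - e)) := by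
  intro a b c d
  set f : R := 1 - e with hfdef
  have hef : e * f = 0 := by rw [hfdef, mul_sub, mul_one, he, sub_self]
  have hfe : f * e = 0 := by rw [hfdef, sub_mul, one_mul, he, sub_self]
  have hff : f * f = f := by
    have h1 : f * f = f * 1 - f * e := by rw [hfdef]; noncomm_ring
    rw [h1, hfe, mul_one, sub_zero]
  have hee' : ∀ x : R, e * (e * x) = e * x := fun x => by rw [← mul_assoc, he]
  have hef' : ∀ x : R, e * (f * x) = 0 := fun x => by rw [← mul_assoc, hef, zero_mul]
  have hfe' : ∀ x : R, f * (e * x) = 0 := fun x => by rw [← mul_assoc, hfe, zero_mul]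
  have hff' : ∀ x : R, f * (f * x) = f * x := fun x => by rw [← mul_assoc, hff]
  obtain ⟨z, hz⟩ := hbij.surjective 0
  have hφ0 : φ 0 = 0 := by
    have h := hmul 0 z
    rw [zero_mul, hz, mul_zero] at h
    exact h
  set A : R := e * a * e with hAdef
  set B : R := e * b * f with hBdef
  set C : R := f * c * e with hCdef
  set D : R := f * d * f with hDdef
  obtain ⟨t, ht⟩ := hbij.surjective (φ A + φ B + φ C + φ D)
  have key : ∀ X Y : R, φ (X * t * Y)
      = φ (X * A * Y) + φ (X * B * Y) + φ (X * C * Y) + φ (X * D * Y) := by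
    intro X Y
    calc φ (X * t * Y) = φ X * φ t * φ Y := by rw [hmul, hmul]
      _ = φ X * (φ A + φ B + φ C + φ D) * φ Y := by rw [ht]
      _ = _ := by simp only [mul_add, add_mul, ← hmul]
  -- component (1,1)
  have s11 : ∀ (x y : R) (k : Fin 2),
      (e * x * e) * t * (e * y * E k) = (e * x * e) * A * (e * y * E k) := by
    intro x y k
    apply hbij.injective
    rw [key]
    have z2 : (e * x * e) * B * (e * y * E k) = 0 := by
      rw [hBdef]; simp only [mul_assoc, hee', hef', hfe', hff', mul_zero, zero_mul]
    have z3 : (e * x * e) * C * (e * y * E k) = 0 := by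
      rw [hCdef]; simp only [mul_assoc, hee', hef', hfe', hff', mul_zero, zero_mul]
    have z4 : (e * x * e) * D * (e * y * E k) = 0 := by
      rw [hDdef]; simp only [mul_assoc, hee', hef', hfe', hff', mul_zero, zero_mul]
    rw [z2, z3, z4, hφ0, add_zero, add_zero, add_zero]
  have h11 : e * t * e = A := by
    have h0 : E 0 * (t - A) * E 0 = 0 := by
      apply hA
      intro k x
      rw [hE0]
      have hs := s11 1 x k
      simp only [mul_assoc, mul_one, one_mul, hee', hef', hfe', hff',
        mul_sub, sub_mul] at hs ⊢
      rw [hs]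
      exact sub_self _
    rw [hE0] at h0
    have h0' : e * t * e - e * A * e = 0 := by rw [← h0]; noncomm_ring
    have h1 : e * t * e = e * A * e := by rwa [sub_eq_zero] at h0'
    have h2 : e * A * e = A := by
      rw [hAdef]; simp only [mul_assoc, hee', he]
    rw [h1, h2]
  -- component (1,2)
  have s12 : ∀ (x y : R) (k : Fin 2),
      (e * x * e) * t * (f * y * E k) = (e * x * e) * B * (f * y * E k) := by
    intro x y k
    apply hbij.injective
    rw [key]
    have z1 : (e * x * e) * A * (f * y * E k) = 0 := by
      rw [hAdef]; simp only [mul_assoc, hee', hef', hfe', hff', mul_zero, zero_mul]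
    have z3 : (e * x * e) * C * (f * y * E k) = 0 := by
      rw [hCdef]; simp only [mul_assoc, hee', hef', hfe', hff', mul_zero, zero_mul]
    have z4 : (e * x * e) * D * (f * y * E k) = 0 := by
      rw [hDdef]; simp only [mul_assoc, hee', hef', hfe', hff', mul_zero, zero_mul]
    rw [z1, z3, z4, hφ0, zero_add, add_zero, add_zero]
  have h12 : e * t * f = B := by
    have h0 : E 0 * (t - B) * E 1 = 0 := by
      apply hA
      intro k x
      rw [hE0, hE1]
      have hs := s12 1 x k
      simp only [mul_assoc, mul_one, one_mul, hee', hef', hfe', hff',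
        mul_sub, sub_mul] at hs ⊢
      rw [hs]
      exact sub_self _
    rw [hE0, hE1] at h0
    have h0' : e * t * f - e * B * f = 0 := by rw [← h0]; noncomm_ring
    have h1 : e * t * f = e * B * f := by rwa [sub_eq_zero] at h0'
    have h2 : e * B * f = B := by
      rw [hBdef]; simp only [mul_assoc, hee', hff]
    rw [h1, h2]
  -- component (2,1)
  have s21 : ∀ (x y : R) (k : Fin 2),
      (f * x * f) * t * (e * y * E k) = (f * x * f) * C * (e * y * E k) := by
    intro x y k
    apply hbij.injective
    rw [key]
    have z1 : (f * x * f) * A * (e * y * E k) = 0 := by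
      rw [hAdef]; simp only [mul_assoc, hee', hef', hfe', hff', mul_zero, zero_mul]
    have z2 : (f * x * f) * B * (e * y * E k) = 0 := by
      rw [hBdef]; simp only [mul_assoc, hee', hef', hfe', hff', mul_zero, zero_mul]
    have z4 : (f * x * f) * D * (e * y * E k) = 0 := by
      rw [hDdef]; simp only [mul_assoc, hee', hef', hfe', hff', mul_zero, zero_mul]
    rw [z1, z2, z4, hφ0, zero_add, zero_add, add_zero]
  have h21 : f * t * e = C := by
    have h0 : E 1 * (t - C) * E 0 = 0 := by
      apply hA
      intro k x
      rw [hE0, hE1]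
      have hs := s21 1 x k
      simp only [mul_assoc, mul_one, one_mul, hee', hef', hfe', hff',
        mul_sub, sub_mul] at hs ⊢
      rw [hs]
      exact sub_self _
    rw [hE0, hE1] at h0
    have h0' : f * t * e - f * C * e = 0 := by rw [← h0]; noncomm_ring
    have h1 : f * t * e = f * C * e := by rwa [sub_eq_zero] at h0'
    have h2 : f * C * e = C := by
      rw [hCdef]; simp only [mul_assoc, hff', he]
    rw [h1, h2]
  -- component (2,2)
  have s22 : ∀ (x y : R) (k : Fin 2),
      (f * x * f) * t * (f * y * E k) = (f * x * f) * D * (f * y * E k) := by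
    intro x y k
    apply hbij.injective
    rw [key]
    have z1 : (f * x * f) * A * (f * y * E k) = 0 := by
      rw [hAdef]; simp only [mul_assoc, hee', hef', hfe', hff', mul_zero, zero_mul]
    have z2 : (f * x * f) * B * (f * y * E k) = 0 := by
      rw [hBdef]; simp only [mul_assoc, hee', hef', hfe', hff', mul_zero, zero_mul]
    have z3 : (f * x * f) * C * (f * y * E k) = 0 := by
      rw [hCdef]; simp only [mul_assoc, hee', hef', hfe', hff', mul_zero, zero_mul]
    rw [z1, z2, z3, hφ0, zero_add, zero_add, zero_add]
  have h22 : f * t * f = D := by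
    have h0 : E 1 * (t - D) * E 1 = 0 := by
      apply hA
      intro k x
      rw [hE1]
      have hs := s22 1 x k
      simp only [mul_assoc, mul_one, one_mul, hee', hef', hfe', hff',
        mul_sub, sub_mul] at hs ⊢
      rw [hs]
      exact sub_self _
    rw [hE1] at h0
    have h0' : f * t * f - f * D * f = 0 := by rw [← h0]; noncomm_ring
    have h1 : f * t * f = f * D * f := by rwa [sub_eq_zero] at h0'
    have h2 : f * D * f = D := by
      rw [hDdef]; simp only [mul_assoc, hff', hff]
    rw [h1, h2]
  have hef1 : e + f = 1 := by rw [hfdef]; noncomm_ring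
  have hT : t = A + B + C + D := by
    calc t = (e + f) * t * (e + f) := by rw [hef1, one_mul, mul_one]
      _ = e * t * e + e * t * f + (f * t * e + f * t * f) := by noncomm_ring
      _ = A + B + C + D := by rw [h11, h12, h21, h22]; abel
  rw [← hT]
  exact ht
end

section
/- Let R be a prime ring with identity and a non-trivial idempotent e. Every multiplicative automorphism of R (a bijective map φ with φ(ab) = φ(a)φ(b) for all a, b) is additive, hence an automorphism. -/
section Stmt9Aux

variable {R : Type*} [Ring R]

private lemma pe1 {e : R} (he : e*e = e) : (1-e)*(1-e) = 1-e := by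
  simp only [mul_sub, sub_mul, one_mul, mul_one, he]; abel

private lemma pe2 {e : R} (he : e*e = e) : e*(1-e) = 0 := by
  rw [mul_sub, mul_one, he, sub_self]

private lemma pe3 {e : R} (he : e*e = e) : (1-e)*e = 0 := by
  rw [sub_mul, one_mul, he, sub_self]

end Stmt9Aux

theorem stmt9 {R : Type*} [Ring R] (hprime : ∀ a b : R, (∀ x : R, a * x * b = 0) → a = 0 ∨ b = 0)
(e : R) (he : e * e = e) (he0 : e ≠ 0) (he1 : e ≠ 1)
(φ : R → R) (hbij : Function.Bijective φ) (hmul : ∀ a b : R, φ (a * b) = φ a * φ b)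
    : (∀ a b : R, φ (a + b) = φ a + φ b) ∧ ∃ ψ : R ≃+* R, ∀ a : R, ψ a = φ a := by
  obtain ⟨hinj, hsurj⟩ := hbij
  set f := φ with hf
  -- basic facts about f
  have h0 : f 0 = 0 := by
    obtain ⟨x, hx⟩ := hsurj 0
    have : f 0 = f 0 * f x := by rw [← hmul]; norm_num
    rw [hx, mul_zero] at this; exact this
  have h1 : f 1 = 1 := by
    obtain ⟨x, hx⟩ := hsurj 1
    have h' : f x = f 1 * f x := by rw [← hmul, one_mul]
    rw [hx, mul_one] at h'
    exact h'.symm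
  obtain ⟨g, hgdef⟩ : ∃ g : R, g = 1 - e := ⟨_, rfl⟩
  have hsum : e + g = 1 := by rw [hgdef]; abel
  have hgg : g*g = g := by rw [hgdef]; exact pe1 he
  have heg : e*g = 0 := by rw [hgdef]; exact pe2 he
  have hge : g*e = 0 := by rw [hgdef]; exact pe3 he
  have hg0 : g ≠ 0 := fun h => he1 (by rw [hgdef, sub_eq_zero] at h; exact h.symm)
  have Hee : ∀ x : R, e*(e*x) = e*x := fun x => by rw [← mul_assoc, he]
  have Heg : ∀ x : R, e*(g*x) = 0 := fun x => by rw [← mul_assoc, heg, zero_mul]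
  have Hge : ∀ x : R, g*(e*x) = 0 := fun x => by rw [← mul_assoc, hge, zero_mul]
  have Hgg : ∀ x : R, g*(g*x) = g*x := fun x => by rw [← mul_assoc, hgg]
  -- splitting lemmas
  have fsum2 : ∀ a b s x : R, f s = f a + f b → f (s*x) = f (a*x) + f (b*x) := by
    intro a b s x h; rw [hmul, h, add_mul, ← hmul, ← hmul]
  have fsum2' : ∀ a b s x : R, f s = f a + f b → f (x*s) = f (x*a) + f (x*b) := by
    intro a b s x h; rw [hmul, h, mul_add, ← hmul, ← hmul]
  have fsum4 : ∀ a b c d s x : R, f s = f a + f b + f c + f d →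
      f (s*x) = f (a*x) + f (b*x) + f (c*x) + f (d*x) := by
    intro a b c d s x h
    rw [hmul, h, add_mul, add_mul, add_mul, ← hmul, ← hmul, ← hmul, ← hmul]
  -- B1 : a ∈ R11, b ∈ R12
  have B1 : ∀ a b : R, e*a*e = a → e*b*g = b → f (a+b) = f a + f b := by
    intro a b ha hb
    obtain ⟨s, hs⟩ := hsurj (f a + f b)
    have k1 : s * e = a := by
      apply hinj
      have e1 : a * e = a := by
        rw [← ha]; simp only [mul_assoc, Hee, Heg, Hge, Hgg, he, hgg, heg, hge, mul_zero, zero_mul]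
      have e2 : b * e = 0 := by
        rw [← hb]; simp only [mul_assoc, Hee, Heg, Hge, Hgg, he, hgg, heg, hge, mul_zero, zero_mul]
      rw [fsum2 a b s e hs, e1, e2, h0, add_zero]
    have k2 : s * g = b := by
      apply hinj
      have e1 : a * g = 0 := by
        rw [← ha]; simp only [mul_assoc, Hee, Heg, Hge, Hgg, he, hgg, heg, hge, mul_zero, zero_mul]
      have e2 : b * g = b := by
        rw [← hb]; simp only [mul_assoc, Hee, Heg, Hge, Hgg, he, hgg, heg, hge, mul_zero, zero_mul]
      rw [fsum2 a b s g hs, e1, e2, h0, zero_add]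
    have hsab : s = a + b := by
      have hh : s * e + s * g = s := by rw [← mul_add, hsum, mul_one]
      rw [← hh, k1, k2]
    rw [← hsab]; exact hs
  -- B2 : a ∈ R11, b ∈ R21
  have B2 : ∀ a b : R, e*a*e = a → g*b*e = b → f (a+b) = f a + f b := by
    intro a b ha hb
    obtain ⟨s, hs⟩ := hsurj (f a + f b)
    have k1 : e * s = a := by
      apply hinj
      have e1 : e * a = a := by
        rw [← ha]; simp only [mul_assoc, Hee, Heg, Hge, Hgg, he, hgg, heg, hge, mul_zero, zero_mul]
      have e2 : e * b = 0 := by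
        rw [← hb]; simp only [mul_assoc, Hee, Heg, Hge, Hgg, he, hgg, heg, hge, mul_zero, zero_mul]
      rw [fsum2' a b s e hs, e1, e2, h0, add_zero]
    have k2 : g * s = b := by
      apply hinj
      have e1 : g * a = 0 := by
        rw [← ha]; simp only [mul_assoc, Hee, Heg, Hge, Hgg, he, hgg, heg, hge, mul_zero, zero_mul]
      have e2 : g * b = b := by
        rw [← hb]; simp only [mul_assoc, Hee, Heg, Hge, Hgg, he, hgg, heg, hge, mul_zero, zero_mul]
      rw [fsum2' a b s g hs, e1, e2, h0, zero_add]
    have hsab : s = a + b := by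
      have hh : e * s + g * s = s := by rw [← add_mul, hsum, one_mul]
      rw [← hh, k1, k2]
    rw [← hsab]; exact hs
  -- B3 : a ∈ R12, b ∈ R22
  have B3 : ∀ a b : R, e*a*g = a → g*b*g = b → f (a+b) = f a + f b := by
    intro a b ha hb
    obtain ⟨s, hs⟩ := hsurj (f a + f b)
    have k1 : e * s = a := by
      apply hinj
      have e1 : e * a = a := by
        rw [← ha]; simp only [mul_assoc, Hee, Heg, Hge, Hgg, he, hgg, heg, hge, mul_zero, zero_mul]
      have e2 : e * b = 0 := by
        rw [← hb]; simp only [mul_assoc, Hee, Heg, Hge, Hgg, he, hgg, heg, hge, mul_zero, zero_mul]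
      rw [fsum2' a b s e hs, e1, e2, h0, add_zero]
    have k2 : g * s = b := by
      apply hinj
      have e1 : g * a = 0 := by
        rw [← ha]; simp only [mul_assoc, Hee, Heg, Hge, Hgg, he, hgg, heg, hge, mul_zero, zero_mul]
      have e2 : g * b = b := by
        rw [← hb]; simp only [mul_assoc, Hee, Heg, Hge, Hgg, he, hgg, heg, hge, mul_zero, zero_mul]
      rw [fsum2' a b s g hs, e1, e2, h0, zero_add]
    have hsab : s = a + b := by
      have hh : e * s + g * s = s := by rw [← add_mul, hsum, one_mul]
      rw [← hh, k1, k2]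
    rw [← hsab]; exact hs
  -- B4 : a ∈ R21, b ∈ R22
  have B4 : ∀ a b : R, g*a*e = a → g*b*g = b → f (a+b) = f a + f b := by
    intro a b ha hb
    obtain ⟨s, hs⟩ := hsurj (f a + f b)
    have k1 : s * e = a := by
      apply hinj
      have e1 : a * e = a := by
        rw [← ha]; simp only [mul_assoc, Hee, Heg, Hge, Hgg, he, hgg, heg, hge, mul_zero, zero_mul]
      have e2 : b * e = 0 := by
        rw [← hb]; simp only [mul_assoc, Hee, Heg, Hge, Hgg, he, hgg, heg, hge, mul_zero, zero_mul]
      rw [fsum2 a b s e hs, e1, e2, h0, add_zero]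
    have k2 : s * g = b := by
      apply hinj
      have e1 : a * g = 0 := by
        rw [← ha]; simp only [mul_assoc, Hee, Heg, Hge, Hgg, he, hgg, heg, hge, mul_zero, zero_mul]
      have e2 : b * g = b := by
        rw [← hb]; simp only [mul_assoc, Hee, Heg, Hge, Hgg, he, hgg, heg, hge, mul_zero, zero_mul]
      rw [fsum2 a b s g hs, e1, e2, h0, zero_add]
    have hsab : s = a + b := by
      have hh : s * e + s * g = s := by rw [← mul_add, hsum, mul_one]
      rw [← hh, k1, k2]
    rw [← hsab]; exact hs
  -- C12 : additivity on R12
  have C12 : ∀ a b : R, e*a*g = a → e*b*g = b → f (a+b) = f a + f b := by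
    intro a b ha hb
    have t1 : e * a = a := by
      rw [← ha]; simp only [mul_assoc, Hee, Heg, Hge, Hgg, he, hgg, heg, hge, mul_zero, zero_mul]
    have t3 : b * a = 0 := by
      rw [← ha, ← hb]; simp only [mul_assoc, Hee, Heg, Hge, Hgg, he, hgg, heg, hge, mul_zero, zero_mul]
    have t4 : b * g = b := by
      rw [← hb]; simp only [mul_assoc, Hee, Heg, Hge, Hgg, he, hgg, heg, hge, mul_zero, zero_mul]
    have fact : (e + b) * (a + g) = a + b := by
      rw [add_mul, mul_add, mul_add, t1, heg, t3, t4]; abel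
    have hb1 : f (e + b) = f e + f b := B1 e b (by rw [he, he]) hb
    have hb3 : f (a + g) = f a + f g := B3 a g ha (by rw [hgg, hgg])
    calc f (a + b) = f ((e + b) * (a + g)) := by rw [fact]
      _ = f (e + b) * f (a + g) := hmul _ _
      _ = (f e + f b) * (f a + f g) := by rw [hb1, hb3]
      _ = f e * f a + f e * f g + f b * f a + f b * f g := by noncomm_ring
      _ = f (e*a) + f (e*g) + f (b*a) + f (b*g) := by rw [hmul, hmul, hmul, hmul]
      _ = f a + f b := by rw [t1, heg, t3, t4, h0, add_zero, add_zero]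
  -- C21 : additivity on R21
  have C21 : ∀ a b : R, g*a*e = a → g*b*e = b → f (a+b) = f a + f b := by
    intro a b ha hb
    have t1 : g * a = a := by
      rw [← ha]; simp only [mul_assoc, Hee, Heg, Hge, Hgg, he, hgg, heg, hge, mul_zero, zero_mul]
    have t3 : b * a = 0 := by
      rw [← ha, ← hb]; simp only [mul_assoc, Hee, Heg, Hge, Hgg, he, hgg, heg, hge, mul_zero, zero_mul]
    have t4 : b * e = b := by
      rw [← hb]; simp only [mul_assoc, Hee, Heg, Hge, Hgg, he, hgg, heg, hge, mul_zero, zero_mul]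
    have fact : (g + b) * (a + e) = a + b := by
      rw [add_mul, mul_add, mul_add, t1, hge, t3, t4]; abel
    have hb4 : f (g + b) = f g + f b := by
      rw [add_comm g b, B4 b g hb (by rw [hgg, hgg])]; abel
    have hb2 : f (a + e) = f a + f e := by
      rw [add_comm a e, B2 e a (by rw [he, he]) ha]; abel
    calc f (a + b) = f ((g + b) * (a + e)) := by rw [fact]
      _ = f (g + b) * f (a + e) := hmul _ _
      _ = (f g + f b) * (f a + f e) := by rw [hb4, hb2]
      _ = f g * f a + f g * f e + f b * f a + f b * f e := by noncomm_ring
      _ = f (g*a) + f (g*e) + f (b*a) + f (b*e) := by rw [hmul, hmul, hmul, hmul]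
      _ = f a + f b := by rw [t1, hge, t3, t4, h0, add_zero, add_zero]
  -- D11 : additivity on R11 (uses primeness)
  have D11 : ∀ a b : R, e*a*e = a → e*b*e = b → f (a+b) = f a + f b := by
    intro a b ha hb
    obtain ⟨s, hs⟩ := hsurj (f a + f b)
    have k1 : ∀ x : R, s * (e*x*g) = (a+b) * (e*x*g) := by
      intro x
      apply hinj
      have m1 : e*(a * (e*x*g))*g = a * (e*x*g) := by
        rw [← ha]; simp only [mul_assoc, Hee, Heg, Hge, Hgg, he, hgg, heg, hge, mul_zero, zero_mul]
      have m2 : e*(b * (e*x*g))*g = b * (e*x*g) := by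
        rw [← hb]; simp only [mul_assoc, Hee, Heg, Hge, Hgg, he, hgg, heg, hge, mul_zero, zero_mul]
      rw [fsum2 a b s (e*x*g) hs, ← C12 _ _ m1 m2, ← add_mul]
    have k2 : ∀ x : R, s * (g*x*g) = (a+b) * (g*x*g) := by
      intro x
      apply hinj
      have z1 : a * (g*x*g) = 0 := by
        rw [← ha]; simp only [mul_assoc, Hee, Heg, Hge, Hgg, he, hgg, heg, hge, mul_zero, zero_mul]
      have z2 : b * (g*x*g) = 0 := by
        rw [← hb]; simp only [mul_assoc, Hee, Heg, Hge, Hgg, he, hgg, heg, hge, mul_zero, zero_mul]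
      rw [fsum2 a b s (g*x*g) hs, z1, z2, add_mul, z1, z2]; simp [h0]
    have key : ∀ x : R, (s - (a+b)) * x * g = 0 := by
      intro x
      have hx : e*x*g + g*x*g = x*g := by
        have hh : e*x*g + g*x*g = (e+g)*x*g := by noncomm_ring
        rw [hh, hsum, one_mul]
      have hh2 : (s - (a+b)) * x * g =
          (s * (e*x*g) + s * (g*x*g)) - ((a+b) * (e*x*g) + (a+b) * (g*x*g)) := by
        rw [← mul_add, ← mul_add, hx]; noncomm_ring
      rw [hh2, k1 x, k2 x]; abel
    rcases hprime _ _ key with h | h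
    · rw [sub_eq_zero] at h
      rw [← h]; exact hs
    · exact absurd h hg0
  -- D22 : additivity on R22 (uses primeness)
  have D22 : ∀ a b : R, g*a*g = a → g*b*g = b → f (a+b) = f a + f b := by
    intro a b ha hb
    obtain ⟨s, hs⟩ := hsurj (f a + f b)
    have k1 : ∀ x : R, s * (g*x*e) = (a+b) * (g*x*e) := by
      intro x
      apply hinj
      have m1 : g*(a * (g*x*e))*e = a * (g*x*e) := by
        rw [← ha]; simp only [mul_assoc, Hee, Heg, Hge, Hgg, he, hgg, heg, hge, mul_zero, zero_mul]
      have m2 : g*(b * (g*x*e))*e = b * (g*x*e) := by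
        rw [← hb]; simp only [mul_assoc, Hee, Heg, Hge, Hgg, he, hgg, heg, hge, mul_zero, zero_mul]
      rw [fsum2 a b s (g*x*e) hs, ← C21 _ _ m1 m2, ← add_mul]
    have k2 : ∀ x : R, s * (e*x*e) = (a+b) * (e*x*e) := by
      intro x
      apply hinj
      have z1 : a * (e*x*e) = 0 := by
        rw [← ha]; simp only [mul_assoc, Hee, Heg, Hge, Hgg, he, hgg, heg, hge, mul_zero, zero_mul]
      have z2 : b * (e*x*e) = 0 := by
        rw [← hb]; simp only [mul_assoc, Hee, Heg, Hge, Hgg, he, hgg, heg, hge, mul_zero, zero_mul]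
      rw [fsum2 a b s (e*x*e) hs, z1, z2, add_mul, z1, z2]; simp [h0]
    have key : ∀ x : R, (s - (a+b)) * x * e = 0 := by
      intro x
      have hx : g*x*e + e*x*e = x*e := by
        have hh : g*x*e + e*x*e = (g+e)*x*e := by noncomm_ring
        rw [hh, add_comm g e, hsum, one_mul]
      have hh2 : (s - (a+b)) * x * e =
          (s * (g*x*e) + s * (e*x*e)) - ((a+b) * (g*x*e) + (a+b) * (e*x*e)) := by
        rw [← mul_add, ← mul_add, hx]; noncomm_ring
      rw [hh2, k1 x, k2 x]; abel
    rcases hprime _ _ key with h | h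
    · rw [sub_eq_zero] at h
      rw [← h]; exact hs
    · exact absurd h he0
  -- E : full Peirce additivity
  have E : ∀ a b c d : R, e*a*e = a → e*b*g = b → g*c*e = c → g*d*g = d →
      f (a+b+c+d) = f a + f b + f c + f d := by
    intro a b c d ha hb hc hd
    obtain ⟨s, hs⟩ := hsurj (f a + f b + f c + f d)
    have k1 : s * e = a + c := by
      apply hinj
      have t1 : a * e = a := by
        rw [← ha]; simp only [mul_assoc, Hee, Heg, Hge, Hgg, he, hgg, heg, hge, mul_zero, zero_mul]
      have t2 : b * e = 0 := by
        rw [← hb]; simp only [mul_assoc, Hee, Heg, Hge, Hgg, he, hgg, heg, hge, mul_zero, zero_mul]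
      have t3 : c * e = c := by
        rw [← hc]; simp only [mul_assoc, Hee, Heg, Hge, Hgg, he, hgg, heg, hge, mul_zero, zero_mul]
      have t4 : d * e = 0 := by
        rw [← hd]; simp only [mul_assoc, Hee, Heg, Hge, Hgg, he, hgg, heg, hge, mul_zero, zero_mul]
      rw [fsum4 a b c d s e hs, t1, t2, t3, t4, h0, add_zero, add_zero, ← B2 a c ha hc]
    have k2 : s * g = b + d := by
      apply hinj
      have t1 : a * g = 0 := by
        rw [← ha]; simp only [mul_assoc, Hee, Heg, Hge, Hgg, he, hgg, heg, hge, mul_zero, zero_mul]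
      have t2 : b * g = b := by
        rw [← hb]; simp only [mul_assoc, Hee, Heg, Hge, Hgg, he, hgg, heg, hge, mul_zero, zero_mul]
      have t3 : c * g = 0 := by
        rw [← hc]; simp only [mul_assoc, Hee, Heg, Hge, Hgg, he, hgg, heg, hge, mul_zero, zero_mul]
      have t4 : d * g = d := by
        rw [← hd]; simp only [mul_assoc, Hee, Heg, Hge, Hgg, he, hgg, heg, hge, mul_zero, zero_mul]
      rw [fsum4 a b c d s g hs, t1, t2, t3, t4, h0, zero_add, add_zero, ← B3 b d hb hd]
    have hsab : s = a + b + c + d := by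
      have hh : s * e + s * g = s := by rw [← mul_add, hsum, mul_one]
      rw [← hh, k1, k2]; abel
    rw [← hsab]; exact hs
  -- final additivity
  have dec : ∀ x : R, e*x*e + e*x*g + g*x*e + g*x*g = x := by
    intro x
    have hh : e*x*e + e*x*g + g*x*e + g*x*g = (e+g)*x*(e+g) := by noncomm_ring
    rw [hh, hsum, one_mul, mul_one]
  have m11 : ∀ x : R, e*(e*x*e)*e = e*x*e := fun x => by
    simp only [mul_assoc, Hee, he]
  have m12 : ∀ x : R, e*(e*x*g)*g = e*x*g := fun x => by
    simp only [mul_assoc, Hee, Hgg, hgg]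
  have m21 : ∀ x : R, g*(g*x*e)*e = g*x*e := fun x => by
    simp only [mul_assoc, Hgg, Hee, he]
  have m22 : ∀ x : R, g*(g*x*g)*g = g*x*g := fun x => by
    simp only [mul_assoc, Hgg, hgg]
  have Ex : ∀ x : R, f x = f (e*x*e) + f (e*x*g) + f (g*x*e) + f (g*x*g) := by
    intro x
    conv_lhs => rw [← dec x]
    exact E _ _ _ _ (m11 x) (m12 x) (m21 x) (m22 x)
  have hadd : ∀ a b : R, f (a + b) = f a + f b := by
    intro a b
    have s11 : e*(a+b)*e = e*a*e + e*b*e := by noncomm_ring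
    have s12 : e*(a+b)*g = e*a*g + e*b*g := by noncomm_ring
    have s21 : g*(a+b)*e = g*a*e + g*b*e := by noncomm_ring
    have s22 : g*(a+b)*g = g*a*g + g*b*g := by noncomm_ring
    rw [Ex (a+b), s11, s12, s21, s22,
      D11 _ _ (m11 a) (m11 b), C12 _ _ (m12 a) (m12 b),
      C21 _ _ (m21 a) (m21 b), D22 _ _ (m22 a) (m22 b),
      Ex a, Ex b]
    abel
  refine ⟨hadd, ?_⟩
  let F : R →+* R :=
    { toFun := φ
      map_one' := h1
      map_mul' := hmul
      map_zero' := h0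
      map_add' := hadd }
  exact ⟨RingEquiv.ofBijective F ⟨hinj, hsurj⟩, fun a => rfl⟩
end

section
/- Let D be a multiplicative skew derivation on R with associated additive multiplicative automorphism φ, and suppose R satisfies condition (A). Then for all a₁₁ ∈ R₁₁, b₁₂ ∈ R₁₂: D(a₁₁ + b₁₂) = D(a₁₁) + D(b₁₂). -/
theorem stmt12 {R : Type*} [Ring R] (e : R) (he : e * e = e) (he0 : e ≠ 0) (he1 : e ≠ 1)
(E : Fin 2 → R) (hE0 : E 0 = e) (hE1 : E 1 = 1 - e)
(hA : ∀ (i j : Fin 2) (a : R), (∀ (k : Fin 2) (x : R), (E i * a * E j) * (E j * x * E k) = 0) → E i * a * E j = 0)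
(φ : R → R) (hbij : Function.Bijective φ) (hmul : ∀ a b : R, φ (a * b) = φ a * φ b)
(hadd : ∀ a b : R, φ (a + b) = φ a + φ b)
    (hphie : φ e + φ (1 - e) = 1)
    (D : R → R) (hD : ∀ a b : R, D (a * b) = D a * b + φ a * D b)
    : ∀ a b : R,
      D (e * a * e + e * b * (1 - e)) = D (e * a * e) + D (e * b * (1 - e)) := by
  intro a b
  have hφ0 : φ 0 = 0 := by
    have := hadd 0 0
    simpa using this.symm
  have hD0 : D 0 = 0 := by
    have := hD 0 0
    simpa [hφ0] using this
  set a₁ := e * a * e with ha₁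
  set b₁ := e * b * (1 - e) with hb₁
  have hφs : φ (a₁ + b₁) = φ a₁ + φ b₁ := hadd _ _
  have he2 : e * (1 - e) = 0 := by rw [mul_sub, mul_one, he, sub_self]
  have he3 : (1 - e) * e = 0 := by rw [sub_mul, one_mul, he, sub_self]
  have hb0 : ∀ x : R, b₁ * (e * x) = 0 := by
    intro x
    rw [hb₁, mul_assoc (e * b) (1 - e) (e * x), ← mul_assoc (1 - e) e x, he3,
      zero_mul, mul_zero]
  have ha0 : ∀ x : R, a₁ * ((1 - e) * x) = 0 := by
    intro x
    rw [ha₁, mul_assoc (e * a) e ((1 - e) * x), ← mul_assoc e (1 - e) x, he2,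
      zero_mul, mul_zero]
  have key1 : ∀ x : R, (D (a₁ + b₁) - D a₁ - D b₁) * (e * x) = 0 := by
    intro x
    have hsb : (a₁ + b₁) * (e * x) = a₁ * (e * x) := by
      rw [add_mul, hb0, add_zero]
    have expand : (D (a₁ + b₁) - D a₁ - D b₁) * (e * x)
        = D ((a₁ + b₁) * (e * x)) - D (a₁ * (e * x)) - D (b₁ * (e * x)) := by
      rw [hD (a₁ + b₁) (e * x), hD a₁ (e * x), hD b₁ (e * x), hφs]; noncomm_ring
    rw [expand, hsb, hb0, hD0, sub_self, zero_sub, neg_zero]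
  have key2 : ∀ x : R, (D (a₁ + b₁) - D a₁ - D b₁) * ((1 - e) * x) = 0 := by
    intro x
    have hsb : (a₁ + b₁) * ((1 - e) * x) = b₁ * ((1 - e) * x) := by
      rw [add_mul, ha0, zero_add]
    have expand : (D (a₁ + b₁) - D a₁ - D b₁) * ((1 - e) * x)
        = D ((a₁ + b₁) * ((1 - e) * x)) - D (a₁ * ((1 - e) * x)) - D (b₁ * ((1 - e) * x)) := by
      rw [hD (a₁ + b₁) ((1 - e) * x), hD a₁ ((1 - e) * x), hD b₁ ((1 - e) * x), hφs]
      noncomm_ring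
    rw [expand, hsb, ha0, hD0, sub_zero, sub_self]
  have hc : D (a₁ + b₁) - D a₁ - D b₁ = 0 := by
    have h1 := key1 1
    have h2 := key2 1
    have : (D (a₁ + b₁) - D a₁ - D b₁) * (e * 1 + (1 - e) * 1) = 0 := by
      rw [mul_add, h1, h2, add_zero]
    simpa using this
  rw [sub_sub] at hc
  exact sub_eq_zero.mp hc
end

section
/- Let D be a multiplicative skew derivation on R with associated additive automorphism φ. Assuming D is additive on mixed sums from R₁₁ + R₁₂ and R₂₂ + R₂₁, then for all a₁₂, b₁₂, c₂₂: D(a₁₂ + b₁₂c₂₂) = D(a₁₂) + D(b₁₂c₂₂). -/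
theorem stmt13 {R : Type*} [Ring R] (e : R) (he : e * e = e) (he0 : e ≠ 0) (he1 : e ≠ 1)
(φ : R → R) (hbij : Function.Bijective φ) (hmul : ∀ a b : R, φ (a * b) = φ a * φ b)
(hadd : ∀ a b : R, φ (a + b) = φ a + φ b)
(D : R → R) (hD : ∀ a b : R, D (a * b) = D a * b + φ a * D b)
    (hD0 : D 0 = 0)
    (h1 : ∀ x y : R, D (e * x * e + e * y * (1 - e)) = D (e * x * e) + D (e * y * (1 - e)))
    (h2 : ∀ x y : R, D ((1 - e) * x * (1 - e) + (1 - e) * y * e)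
        = D ((1 - e) * x * (1 - e)) + D ((1 - e) * y * e))
    : ∀ a b c : R,
      D (e * a * (1 - e) + (e * b * (1 - e)) * ((1 - e) * c * (1 - e)))
        = D (e * a * (1 - e)) + D ((e * b * (1 - e)) * ((1 - e) * c * (1 - e))) := by
  intro a b c
  set A := e * a * (1 - e) with hA
  set B := e * b * (1 - e) with hB
  set C := (1 - e) * c * (1 - e) with hC
  have hqe : (1 - e) * e = 0 := by rw [sub_mul, one_mul, he, sub_self]
  have heq : e * (1 - e) = 0 := by rw [mul_sub, mul_one, he, sub_self]
  have heA : e * A = A := by rw [hA, ← mul_assoc, ← mul_assoc, he]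
  have heC : e * C = 0 := by rw [hC, ← mul_assoc, ← mul_assoc, heq, zero_mul, zero_mul]
  have hBA : B * A = 0 := by
    rw [hA, hB]
    rw [show e * b * (1 - e) * (e * a * (1 - e)) = e * b * ((1 - e) * e) * (a * (1 - e)) by
      noncomm_ring, hqe, mul_zero, zero_mul]
  have hX1 : e * (A + C) = A := by rw [mul_add, heA, heC, add_zero]
  have hX2 : B * (A + C) = B * C := by rw [mul_add, hBA, zero_add]
  have key : (e + B) * (A + C) = A + B * C := by rw [add_mul, hX1, hX2]
  have hDeB : D (e + B) = D e + D B := by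
    have := h1 1 b
    rwa [mul_one, he] at this
  calc D (A + B * C) = D ((e + B) * (A + C)) := by rw [key]
    _ = D (e + B) * (A + C) + φ (e + B) * D (A + C) := hD _ _
    _ = (D e * (A + C) + φ e * D (A + C)) + (D B * (A + C) + φ B * D (A + C)) := by
        rw [hDeB, hadd]; noncomm_ring
    _ = D (e * (A + C)) + D (B * (A + C)) := by rw [hD e (A + C), hD B (A + C)]
    _ = D A + D (B * C) := by rw [hX1, hX2]
end

section
/- Let R be a 2-torsion free semiprime ring with identity and non-trivial idempotent e satisfying condition (B). Then every multiplicative skew derivation D on R (with associated multiplicative automorphism φ) is additive. -/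
namespace Stmt15Aux

variable {R : Type*} [Ring R]

theorem right_ann (hsemi : ∀ a : R, (∀ x : R, a * x * a = 0) → a = 0)
    (a : R) (h : ∀ x : R, a * x = 0) : a = 0 :=
  hsemi a fun x => by rw [h x, zero_mul]

theorem left_ann (hsemi : ∀ a : R, (∀ x : R, a * x * a = 0) → a = 0)
    (a : R) (h : ∀ x : R, x * a = 0) : a = 0 :=
  hsemi a fun x => by rw [mul_assoc, h x, mul_zero]

theorem sub3 {x y z : R} (h : x - y - z = 0) : x = y + z := by
  have h2 : x - (y + z) = 0 := by rw [sub_add_eq_sub_sub]; exact h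
  exact sub_eq_zero.mp h2

theorem szero (σ : R → R) (hsurj : Function.Surjective σ)
    (hm : ∀ a b : R, σ (a * b) = σ a * σ b) : σ 0 = 0 := by
  have h : ∀ z : R, σ 0 * z = σ 0 := by
    intro z
    obtain ⟨y, hy⟩ := hsurj z
    rw [← hy, ← hm, zero_mul]
  have := h 0
  rwa [mul_zero, eq_comm] at this

structure Ctx (R : Type*) [Ring R] where
  u : R
  v : R
  huu : u * u = u
  hvv : v * v = v
  huv : u * v = 0
  hvu : v * u = 0
  hsum : u + v = 1
  hsemi : ∀ a : R, (∀ x : R, a * x * a = 0) → a = 0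
  hBu : ∀ a : R, (∀ x : R, (u * a * u) * (u * x * v) = 0) → u * a * u = 0
  hBv : ∀ a : R, (∀ x : R, (v * a * v) * (v * x * u) = 0) → v * a * v = 0

namespace Ctx

variable {R : Type*} [Ring R] (C : Ctx R)

def swap : Ctx R where
  u := C.v
  v := C.u
  huu := C.hvv
  hvv := C.huu
  huv := C.hvu
  hvu := C.huv
  hsum := by rw [add_comm]; exact C.hsum
  hsemi := C.hsemi
  hBu := C.hBv
  hBv := C.hBu

theorem master (c : R) (h1 : ∀ x : R, c * (C.u * x * C.v) = 0)
    (h2 : ∀ x : R, c * (C.v * x * C.u) = 0) : c = 0 := by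
  have hc11 : C.u * c * C.u = 0 := by
    apply C.hBu
    intro x
    have h := h1 x
    calc C.u * c * C.u * (C.u * x * C.v)
        = C.u * (c * (C.u * x * C.v)) := by
          simp only [mul_assoc]
          rw [← mul_assoc C.u C.u, C.huu]
      _ = 0 := by rw [h, mul_zero]
  have hc22 : C.v * c * C.v = 0 := by
    apply C.hBv
    intro x
    have h := h2 x
    calc C.v * c * C.v * (C.v * x * C.u)
        = C.v * (c * (C.v * x * C.u)) := by
          simp only [mul_assoc]
          rw [← mul_assoc C.v C.v, C.hvv]
      _ = 0 := by rw [h, mul_zero]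
  have hc12 : C.u * c * C.v = 0 := by
    apply C.hsemi
    intro x
    have h := h2 x
    calc C.u * c * C.v * x * (C.u * c * C.v)
        = C.u * (c * (C.v * x * C.u)) * (c * C.v) := by simp only [mul_assoc]
      _ = 0 := by rw [h, mul_zero, zero_mul]
  have hc21 : C.v * c * C.u = 0 := by
    apply C.hsemi
    intro x
    have h := h1 x
    calc C.v * c * C.u * x * (C.v * c * C.u)
        = C.v * (c * (C.u * x * C.v)) * (c * C.u) := by simp only [mul_assoc]
      _ = 0 := by rw [h, mul_zero, zero_mul]
  have hd1 : C.u * c + C.v * c = c := by rw [← add_mul, C.hsum, one_mul]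
  have hd2 : c * C.u + c * C.v = c := by rw [← mul_add, C.hsum, mul_one]
  calc c = (C.u * c + C.v * c) * C.u + (C.u * c + C.v * c) * C.v := by rw [hd1, hd2]
    _ = C.u * c * C.u + C.u * c * C.v + (C.v * c * C.u + C.v * c * C.v) := by
        simp only [add_mul]; abel
    _ = 0 := by rw [hc11, hc12, hc21, hc22]; simp

/-! ### Phase 1 : additivity of the multiplicative bijection σ -/

section Sigma

variable (σ : R → R) (hinj : Function.Injective σ) (hsurj : Function.Surjective σ)
  (hm : ∀ a b : R, σ (a * b) = σ a * σ b) (h0 : σ 0 = 0)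

include C hinj hsurj hm h0

theorem ml (a b : R) (ha : C.u * a = a) (hb : C.v * b = b) :
    σ (a + b) = σ a + σ b := by
  obtain ⟨s, hs⟩ := hsurj (σ a + σ b)
  have hva : C.v * a = 0 := by rw [← ha, ← mul_assoc, C.hvu, zero_mul]
  have hub : C.u * b = 0 := by rw [← hb, ← mul_assoc, C.huv, zero_mul]
  have k1 : ∀ z : R, z * C.v * s = z * C.v * (a + b) := by
    intro z
    have e1 : z * C.v * a = 0 := by rw [mul_assoc, hva, mul_zero]
    have e2 : z * C.v * (a + b) = z * C.v * b := by rw [mul_add, e1, zero_add]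
    apply hinj
    calc σ (z * C.v * s) = σ (z * C.v) * σ s := hm _ _
      _ = σ (z * C.v) * σ a + σ (z * C.v) * σ b := by rw [hs, mul_add]
      _ = σ (z * C.v * a) + σ (z * C.v * b) := by rw [← hm, ← hm]
      _ = σ (z * C.v * b) := by rw [e1, h0, zero_add]
      _ = σ (z * C.v * (a + b)) := by rw [e2]
  have k2 : ∀ z : R, z * C.u * s = z * C.u * (a + b) := by
    intro z
    have e1 : z * C.u * b = 0 := by rw [mul_assoc, hub, mul_zero]
    have e2 : z * C.u * (a + b) = z * C.u * a := by rw [mul_add, e1, add_zero]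
    apply hinj
    calc σ (z * C.u * s) = σ (z * C.u) * σ s := hm _ _
      _ = σ (z * C.u) * σ a + σ (z * C.u) * σ b := by rw [hs, mul_add]
      _ = σ (z * C.u * a) + σ (z * C.u * b) := by rw [← hm, ← hm]
      _ = σ (z * C.u * a) := by rw [e1, h0, add_zero]
      _ = σ (z * C.u * (a + b)) := by rw [e2]
  have hz : ∀ z : R, z * (s - (a + b)) = 0 := by
    intro z
    have hzd : z * C.u * s + z * C.v * s = z * s := by
      rw [← add_mul, ← mul_add, C.hsum, mul_one]
    have hzd2 : z * C.u * (a + b) + z * C.v * (a + b) = z * (a + b) := by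
      rw [← add_mul, ← mul_add, C.hsum, mul_one]
    rw [mul_sub, ← hzd, ← hzd2, k1 z, k2 z]
    abel
  have hsab : s = a + b := sub_eq_zero.mp (left_ann C.hsemi _ hz)
  rw [← hsab]
  exact hs

theorem mr (a b : R) (ha : a * C.u = a) (hb : b * C.v = b) :
    σ (a + b) = σ a + σ b := by
  obtain ⟨s, hs⟩ := hsurj (σ a + σ b)
  have hav : a * C.v = 0 := by rw [← ha, mul_assoc, C.huv, mul_zero]
  have hbu : b * C.u = 0 := by rw [← hb, mul_assoc, C.hvu, mul_zero]
  have k1 : ∀ z : R, s * (C.u * z) = (a + b) * (C.u * z) := by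
    intro z
    have e1 : b * (C.u * z) = 0 := by rw [← mul_assoc, hbu, zero_mul]
    have e2 : (a + b) * (C.u * z) = a * (C.u * z) := by rw [add_mul, e1, add_zero]
    apply hinj
    calc σ (s * (C.u * z)) = σ s * σ (C.u * z) := hm _ _
      _ = σ a * σ (C.u * z) + σ b * σ (C.u * z) := by rw [hs, add_mul]
      _ = σ (a * (C.u * z)) + σ (b * (C.u * z)) := by rw [← hm, ← hm]
      _ = σ (a * (C.u * z)) := by rw [e1, h0, add_zero]
      _ = σ ((a + b) * (C.u * z)) := by rw [e2]
  have k2 : ∀ z : R, s * (C.v * z) = (a + b) * (C.v * z) := by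
    intro z
    have e1 : a * (C.v * z) = 0 := by rw [← mul_assoc, hav, zero_mul]
    have e2 : (a + b) * (C.v * z) = b * (C.v * z) := by rw [add_mul, e1, zero_add]
    apply hinj
    calc σ (s * (C.v * z)) = σ s * σ (C.v * z) := hm _ _
      _ = σ a * σ (C.v * z) + σ b * σ (C.v * z) := by rw [hs, add_mul]
      _ = σ (a * (C.v * z)) + σ (b * (C.v * z)) := by rw [← hm, ← hm]
      _ = σ (b * (C.v * z)) := by rw [e1, h0, zero_add]
      _ = σ ((a + b) * (C.v * z)) := by rw [e2]
  have hz : ∀ z : R, (s - (a + b)) * z = 0 := by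
    intro z
    have hzd : s * (C.u * z) + s * (C.v * z) = s * z := by
      rw [← mul_add, ← add_mul, C.hsum, one_mul]
    have hzd2 : (a + b) * (C.u * z) + (a + b) * (C.v * z) = (a + b) * z := by
      rw [← mul_add, ← add_mul, C.hsum, one_mul]
    rw [sub_mul, ← hzd, ← hzd2, k1 z, k2 z]
    abel
  have hsab : s = a + b := sub_eq_zero.mp (right_ann C.hsemi _ hz)
  rw [← hsab]
  exact hs

theorem m3 (a b : R) (ha1 : C.u * a = a) (ha2 : a * C.v = a)
    (hb1 : C.u * b = b) (hb2 : b * C.v = b) : σ (a + b) = σ a + σ b := by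
  have hva : C.v * a = 0 := by rw [← ha1, ← mul_assoc, C.hvu, zero_mul]
  have hba : b * a = 0 := by rw [← hb2, mul_assoc, hva, mul_zero]
  have hfac : (C.u + b) * (a + C.v) = a + b := by
    rw [add_mul, mul_add, mul_add, ha1, C.huv, hba, hb2]
    abel
  have e1 : σ (C.u + b) = σ C.u + σ b := C.mr σ hinj hsurj hm h0 C.u b C.huu hb2
  have e2 : σ (a + C.v) = σ a + σ C.v := C.ml σ hinj hsurj hm h0 a C.v ha1 C.hvv
  calc σ (a + b) = σ ((C.u + b) * (a + C.v)) := by rw [hfac]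
    _ = (σ C.u + σ b) * (σ a + σ C.v) := by rw [hm, e1, e2]
    _ = σ (C.u * a) + σ (C.u * C.v) + (σ (b * a) + σ (b * C.v)) := by
        rw [add_mul, mul_add, mul_add, ← hm, ← hm, ← hm, ← hm]
    _ = σ a + σ b := by rw [ha1, C.huv, hba, hb2, h0]; abel

theorem m4 (a b : R) (ha1 : C.u * a = a) (ha2 : a * C.u = a)
    (hb1 : C.u * b = b) (hb2 : b * C.u = b) : σ (a + b) = σ a + σ b := by
  obtain ⟨s, hs⟩ := hsurj (σ a + σ b)
  have hav : a * C.v = 0 := by rw [← ha2, mul_assoc, C.huv, mul_zero]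
  have hbv : b * C.v = 0 := by rw [← hb2, mul_assoc, C.huv, mul_zero]
  have k1 : ∀ x : R, s * (C.u * x * C.v) = (a + b) * (C.u * x * C.v) := by
    intro x
    have htv : (C.u * x * C.v) * C.v = C.u * x * C.v := by rw [mul_assoc, C.hvv]
    have m1 : C.u * (a * (C.u * x * C.v)) = a * (C.u * x * C.v) := by
      rw [← mul_assoc, ha1]
    have m2 : (a * (C.u * x * C.v)) * C.v = a * (C.u * x * C.v) := by
      rw [mul_assoc, htv]
    have m3' : C.u * (b * (C.u * x * C.v)) = b * (C.u * x * C.v) := by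
      rw [← mul_assoc, hb1]
    have m4' : (b * (C.u * x * C.v)) * C.v = b * (C.u * x * C.v) := by
      rw [mul_assoc, htv]
    apply hinj
    calc σ (s * (C.u * x * C.v))
        = σ a * σ (C.u * x * C.v) + σ b * σ (C.u * x * C.v) := by rw [hm, hs, add_mul]
      _ = σ (a * (C.u * x * C.v)) + σ (b * (C.u * x * C.v)) := by rw [← hm, ← hm]
      _ = σ (a * (C.u * x * C.v) + b * (C.u * x * C.v)) :=
          (C.m3 σ hinj hsurj hm h0 _ _ m1 m2 m3' m4').symm
      _ = σ ((a + b) * (C.u * x * C.v)) := by rw [add_mul]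
  have k2 : ∀ x : R, s * (C.v * x * C.u) = (a + b) * (C.v * x * C.u) := by
    intro x
    have e1 : a * (C.v * x * C.u) = 0 := by
      rw [← mul_assoc, ← mul_assoc, hav, zero_mul, zero_mul]
    have e2 : b * (C.v * x * C.u) = 0 := by
      rw [← mul_assoc, ← mul_assoc, hbv, zero_mul, zero_mul]
    have e3 : (a + b) * (C.v * x * C.u) = 0 := by rw [add_mul, e1, e2, add_zero]
    apply hinj
    calc σ (s * (C.v * x * C.u))
        = σ a * σ (C.v * x * C.u) + σ b * σ (C.v * x * C.u) := by rw [hm, hs, add_mul]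
      _ = σ (a * (C.v * x * C.u)) + σ (b * (C.v * x * C.u)) := by rw [← hm, ← hm]
      _ = 0 := by rw [e1, e2, h0, add_zero]
      _ = σ ((a + b) * (C.v * x * C.u)) := by rw [e3, h0]
  have hc : s - (a + b) = 0 := by
    apply C.master
    · intro x; rw [sub_mul, k1 x, sub_self]
    · intro x; rw [sub_mul, k2 x, sub_self]
  rw [← sub_eq_zero.mp hc]
  exact hs

theorem m5 (a b : R) (ha : a * C.v = a) (hb : b * C.v = b) :
    σ (a + b) = σ a + σ b := by
  have ha' : C.u * a + C.v * a = a := by rw [← add_mul, C.hsum, one_mul]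
  have hb' : C.u * b + C.v * b = b := by rw [← add_mul, C.hsum, one_mul]
  have m_ua_u : C.u * (C.u * a) = C.u * a := by rw [← mul_assoc, C.huu]
  have m_ua_v : (C.u * a) * C.v = C.u * a := by rw [mul_assoc, ha]
  have m_ub_u : C.u * (C.u * b) = C.u * b := by rw [← mul_assoc, C.huu]
  have m_ub_v : (C.u * b) * C.v = C.u * b := by rw [mul_assoc, hb]
  have m_va_v : C.v * (C.v * a) = C.v * a := by rw [← mul_assoc, C.hvv]
  have m_va_v2 : (C.v * a) * C.v = C.v * a := by rw [mul_assoc, ha]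
  have m_vb_v : C.v * (C.v * b) = C.v * b := by rw [← mul_assoc, C.hvv]
  have m_vb_v2 : (C.v * b) * C.v = C.v * b := by rw [mul_assoc, hb]
  have hrear : (C.u * a + C.u * b) + (C.v * a + C.v * b) = a + b := by
    calc (C.u * a + C.u * b) + (C.v * a + C.v * b)
        = (C.u * a + C.v * a) + (C.u * b + C.v * b) := by abel
      _ = a + b := by rw [ha', hb']
  have mP : C.u * (C.u * a + C.u * b) = C.u * a + C.u * b := by
    rw [mul_add, m_ua_u, m_ub_u]
  have mQ : C.v * (C.v * a + C.v * b) = C.v * a + C.v * b := by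
    rw [mul_add, m_va_v, m_vb_v]
  have s1 : σ (a + b) = σ (C.u * a + C.u * b) + σ (C.v * a + C.v * b) := by
    calc σ (a + b) = σ ((C.u * a + C.u * b) + (C.v * a + C.v * b)) := by rw [hrear]
      _ = _ := C.ml σ hinj hsurj hm h0 _ _ mP mQ
  have s2 : σ (C.u * a + C.u * b) = σ (C.u * a) + σ (C.u * b) :=
    C.m3 σ hinj hsurj hm h0 _ _ m_ua_u m_ua_v m_ub_u m_ub_v
  have s3 : σ (C.v * a + C.v * b) = σ (C.v * a) + σ (C.v * b) :=
    C.swap.m4 σ hinj hsurj hm h0 _ _ m_va_v m_va_v2 m_vb_v m_vb_v2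
  have s4 : σ (C.u * a) + σ (C.v * a) = σ a := by
    have t1 := C.ml σ hinj hsurj hm h0 (C.u * a) (C.v * a) m_ua_u m_va_v
    rw [ha'] at t1
    exact t1.symm
  have s5 : σ (C.u * b) + σ (C.v * b) = σ b := by
    have t1 := C.ml σ hinj hsurj hm h0 (C.u * b) (C.v * b) m_ub_u m_vb_v
    rw [hb'] at t1
    exact t1.symm
  rw [s1, s2, s3, ← s4, ← s5]
  abel

theorem addt (a b : R) : σ (a + b) = σ a + σ b := by
  obtain ⟨s, hs⟩ := hsurj (σ a + σ b)
  have k1 : ∀ x : R, s * (C.u * x * C.v) = (a + b) * (C.u * x * C.v) := by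
    intro x
    have htv : (C.u * x * C.v) * C.v = C.u * x * C.v := by rw [mul_assoc, C.hvv]
    have h1 : (a * (C.u * x * C.v)) * C.v = a * (C.u * x * C.v) := by
      rw [mul_assoc, htv]
    have h2 : (b * (C.u * x * C.v)) * C.v = b * (C.u * x * C.v) := by
      rw [mul_assoc, htv]
    apply hinj
    calc σ (s * (C.u * x * C.v))
        = σ a * σ (C.u * x * C.v) + σ b * σ (C.u * x * C.v) := by rw [hm, hs, add_mul]
      _ = σ (a * (C.u * x * C.v)) + σ (b * (C.u * x * C.v)) := by rw [← hm, ← hm]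
      _ = σ (a * (C.u * x * C.v) + b * (C.u * x * C.v)) :=
          (C.m5 σ hinj hsurj hm h0 _ _ h1 h2).symm
      _ = σ ((a + b) * (C.u * x * C.v)) := by rw [add_mul]
  have k2 : ∀ x : R, s * (C.v * x * C.u) = (a + b) * (C.v * x * C.u) := by
    intro x
    have htu : (C.v * x * C.u) * C.u = C.v * x * C.u := by rw [mul_assoc, C.huu]
    have h1 : (a * (C.v * x * C.u)) * C.u = a * (C.v * x * C.u) := by
      rw [mul_assoc, htu]
    have h2 : (b * (C.v * x * C.u)) * C.u = b * (C.v * x * C.u) := by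
      rw [mul_assoc, htu]
    apply hinj
    calc σ (s * (C.v * x * C.u))
        = σ a * σ (C.v * x * C.u) + σ b * σ (C.v * x * C.u) := by rw [hm, hs, add_mul]
      _ = σ (a * (C.v * x * C.u)) + σ (b * (C.v * x * C.u)) := by rw [← hm, ← hm]
      _ = σ (a * (C.v * x * C.u) + b * (C.v * x * C.u)) :=
          (C.swap.m5 σ hinj hsurj hm h0 _ _ h1 h2).symm
      _ = σ ((a + b) * (C.v * x * C.u)) := by rw [add_mul]
  have hc : s - (a + b) = 0 := by
    apply C.master
    · intro x; rw [sub_mul, k1 x, sub_self]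
    · intro x; rw [sub_mul, k2 x, sub_self]
  rw [← sub_eq_zero.mp hc]
  exact hs

end Sigma

/-! ### Phase 2 : additivity of the skew derivation D -/

section Der

variable (φ D : R → R) (hsur : Function.Surjective φ)
  (hadd : ∀ a b : R, φ (a + b) = φ a + φ b)
  (hd : ∀ a b : R, D (a * b) = D a * b + φ a * D b)
  (h0 : D 0 = 0)

include C hsur hadd hd h0

theorem lkey (p x y : R) :
    φ p * (D (x + y) - D x - D y) = D (p * (x + y)) - D (p * x) - D (p * y) := by
  rw [hd, hd, hd]
  simp only [mul_add, mul_sub]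
  abel

theorem rkey (p x y : R) :
    (D (x + y) - D x - D y) * p = D ((x + y) * p) - D (x * p) - D (y * p) := by
  rw [hd, hd, hd, hadd]
  simp only [add_mul, sub_mul]
  abel

theorem dml (a b : R) (ha : C.u * a = a) (hb : C.v * b = b) :
    D (a + b) = D a + D b := by
  have hva : C.v * a = 0 := by rw [← ha, ← mul_assoc, C.hvu, zero_mul]
  have hub : C.u * b = 0 := by rw [← hb, ← mul_assoc, C.huv, zero_mul]
  have key1 : ∀ w : R, φ (w * C.v) * (D (a + b) - D a - D b) = 0 := by
    intro w
    rw [lkey C φ D hsur hadd hd h0]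
    have e1 : w * C.v * a = 0 := by rw [mul_assoc, hva, mul_zero]
    have e2 : w * C.v * (a + b) = w * C.v * b := by rw [mul_add, e1, zero_add]
    rw [e2, e1, h0]
    abel
  have key2 : ∀ w : R, φ (w * C.u) * (D (a + b) - D a - D b) = 0 := by
    intro w
    rw [lkey C φ D hsur hadd hd h0]
    have e1 : w * C.u * b = 0 := by rw [mul_assoc, hub, mul_zero]
    have e2 : w * C.u * (a + b) = w * C.u * a := by rw [mul_add, e1, add_zero]
    rw [e2, e1, h0]
    abel
  have hz : ∀ z : R, z * (D (a + b) - D a - D b) = 0 := by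
    intro z
    obtain ⟨y, hy⟩ := hsur z
    have hy' : y * C.u + y * C.v = y := by rw [← mul_add, C.hsum, mul_one]
    calc z * (D (a + b) - D a - D b)
        = (φ (y * C.u) + φ (y * C.v)) * (D (a + b) - D a - D b) := by
          rw [← hadd, hy', hy]
      _ = 0 := by rw [add_mul, key1 y, key2 y, add_zero]
  exact sub3 (left_ann C.hsemi _ hz)

theorem dmr (a b : R) (ha : a * C.u = a) (hb : b * C.v = b) :
    D (a + b) = D a + D b := by
  have hav : a * C.v = 0 := by rw [← ha, mul_assoc, C.huv, mul_zero]
  have hbu : b * C.u = 0 := by rw [← hb, mul_assoc, C.hvu, mul_zero]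
  have key1 : ∀ w : R, (D (a + b) - D a - D b) * (C.u * w) = 0 := by
    intro w
    rw [rkey C φ D hsur hadd hd h0]
    have e1 : b * (C.u * w) = 0 := by rw [← mul_assoc, hbu, zero_mul]
    have e2 : (a + b) * (C.u * w) = a * (C.u * w) := by rw [add_mul, e1, add_zero]
    rw [e2, e1, h0]
    abel
  have key2 : ∀ w : R, (D (a + b) - D a - D b) * (C.v * w) = 0 := by
    intro w
    rw [rkey C φ D hsur hadd hd h0]
    have e1 : a * (C.v * w) = 0 := by rw [← mul_assoc, hav, zero_mul]
    have e2 : (a + b) * (C.v * w) = b * (C.v * w) := by rw [add_mul, e1, zero_add]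
    rw [e2, e1, h0]
    abel
  have hz : ∀ z : R, (D (a + b) - D a - D b) * z = 0 := by
    intro z
    have hz' : C.u * z + C.v * z = z := by rw [← add_mul, C.hsum, one_mul]
    calc (D (a + b) - D a - D b) * z
        = (D (a + b) - D a - D b) * (C.u * z + C.v * z) := by rw [hz']
      _ = 0 := by rw [mul_add, key1 z, key2 z, add_zero]
  exact sub3 (right_ann C.hsemi _ hz)

theorem d3 (a b : R) (ha1 : C.u * a = a) (ha2 : a * C.v = a)
    (hb1 : C.u * b = b) (hb2 : b * C.v = b) : D (a + b) = D a + D b := by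
  have hva : C.v * a = 0 := by rw [← ha1, ← mul_assoc, C.hvu, zero_mul]
  have hba : b * a = 0 := by rw [← hb2, mul_assoc, hva, mul_zero]
  have hfac : (C.u + b) * (a + C.v) = a + b := by
    rw [add_mul, mul_add, mul_add, ha1, C.huv, hba, hb2]
    abel
  have g1 : D a = D C.u * a + φ C.u * D a := by
    have := hd C.u a
    rwa [ha1] at this
  have g2 : D b = D b * C.v + φ b * D C.v := by
    have := hd b C.v
    rwa [hb2] at this
  have g3 : (0 : R) = D C.u * C.v + φ C.u * D C.v := by
    have := hd C.u C.v
    rwa [C.huv, h0] at this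
  have g4 : (0 : R) = D b * a + φ b * D a := by
    have := hd b a
    rwa [hba, h0] at this
  calc D (a + b) = D ((C.u + b) * (a + C.v)) := by rw [hfac]
    _ = D (C.u + b) * (a + C.v) + φ (C.u + b) * D (a + C.v) := hd _ _
    _ = (D C.u + D b) * (a + C.v) + (φ C.u + φ b) * (D a + D C.v) := by
        rw [C.dmr φ D hsur hadd hd h0 C.u b C.huu hb2,
            C.dml φ D hsur hadd hd h0 a C.v ha1 C.hvv, hadd]
    _ = (D C.u * a + φ C.u * D a) + (D b * C.v + φ b * D C.v)
        + ((D C.u * C.v + φ C.u * D C.v) + (D b * a + φ b * D a)) := by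
        simp only [add_mul, mul_add]; abel
    _ = D a + D b := by rw [← g1, ← g2, ← g3, ← g4]; abel

theorem d4 (a b : R) (ha1 : C.u * a = a) (ha2 : a * C.u = a)
    (hb1 : C.u * b = b) (hb2 : b * C.u = b) : D (a + b) = D a + D b := by
  have hav : a * C.v = 0 := by rw [← ha2, mul_assoc, C.huv, mul_zero]
  have hbv : b * C.v = 0 := by rw [← hb2, mul_assoc, C.huv, mul_zero]
  have key1 : ∀ x : R, (D (a + b) - D a - D b) * (C.u * x * C.v) = 0 := by
    intro x
    rw [rkey C φ D hsur hadd hd h0]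
    have htv : (C.u * x * C.v) * C.v = C.u * x * C.v := by rw [mul_assoc, C.hvv]
    have m1 : C.u * (a * (C.u * x * C.v)) = a * (C.u * x * C.v) := by
      rw [← mul_assoc, ha1]
    have m2 : (a * (C.u * x * C.v)) * C.v = a * (C.u * x * C.v) := by
      rw [mul_assoc, htv]
    have m3' : C.u * (b * (C.u * x * C.v)) = b * (C.u * x * C.v) := by
      rw [← mul_assoc, hb1]
    have m4' : (b * (C.u * x * C.v)) * C.v = b * (C.u * x * C.v) := by
      rw [mul_assoc, htv]
    rw [add_mul, C.d3 φ D hsur hadd hd h0 _ _ m1 m2 m3' m4']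
    abel
  have key2 : ∀ x : R, (D (a + b) - D a - D b) * (C.v * x * C.u) = 0 := by
    intro x
    rw [rkey C φ D hsur hadd hd h0]
    have e1 : a * (C.v * x * C.u) = 0 := by
      rw [← mul_assoc, ← mul_assoc, hav, zero_mul, zero_mul]
    have e2 : b * (C.v * x * C.u) = 0 := by
      rw [← mul_assoc, ← mul_assoc, hbv, zero_mul, zero_mul]
    have e3 : (a + b) * (C.v * x * C.u) = 0 := by rw [add_mul, e1, e2, add_zero]
    rw [e1, e2, e3, h0]
    abel
  exact sub3 (C.master _ key1 key2)

theorem d5 (a b : R) (ha : a * C.v = a) (hb : b * C.v = b) :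
    D (a + b) = D a + D b := by
  have ha' : C.u * a + C.v * a = a := by rw [← add_mul, C.hsum, one_mul]
  have hb' : C.u * b + C.v * b = b := by rw [← add_mul, C.hsum, one_mul]
  have m_ua_u : C.u * (C.u * a) = C.u * a := by rw [← mul_assoc, C.huu]
  have m_ua_v : (C.u * a) * C.v = C.u * a := by rw [mul_assoc, ha]
  have m_ub_u : C.u * (C.u * b) = C.u * b := by rw [← mul_assoc, C.huu]
  have m_ub_v : (C.u * b) * C.v = C.u * b := by rw [mul_assoc, hb]
  have m_va_v : C.v * (C.v * a) = C.v * a := by rw [← mul_assoc, C.hvv]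
  have m_va_v2 : (C.v * a) * C.v = C.v * a := by rw [mul_assoc, ha]
  have m_vb_v : C.v * (C.v * b) = C.v * b := by rw [← mul_assoc, C.hvv]
  have m_vb_v2 : (C.v * b) * C.v = C.v * b := by rw [mul_assoc, hb]
  have hrear : (C.u * a + C.u * b) + (C.v * a + C.v * b) = a + b := by
    calc (C.u * a + C.u * b) + (C.v * a + C.v * b)
        = (C.u * a + C.v * a) + (C.u * b + C.v * b) := by abel
      _ = a + b := by rw [ha', hb']
  have mP : C.u * (C.u * a + C.u * b) = C.u * a + C.u * b := by
    rw [mul_add, m_ua_u, m_ub_u]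
  have mQ : C.v * (C.v * a + C.v * b) = C.v * a + C.v * b := by
    rw [mul_add, m_va_v, m_vb_v]
  have s1 : D (a + b) = D (C.u * a + C.u * b) + D (C.v * a + C.v * b) := by
    calc D (a + b) = D ((C.u * a + C.u * b) + (C.v * a + C.v * b)) := by rw [hrear]
      _ = _ := C.dml φ D hsur hadd hd h0 _ _ mP mQ
  have s2 : D (C.u * a + C.u * b) = D (C.u * a) + D (C.u * b) :=
    C.d3 φ D hsur hadd hd h0 _ _ m_ua_u m_ua_v m_ub_u m_ub_v
  have s3 : D (C.v * a + C.v * b) = D (C.v * a) + D (C.v * b) :=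
    C.swap.d4 φ D hsur hadd hd h0 _ _ m_va_v m_va_v2 m_vb_v m_vb_v2
  have s4 : D (C.u * a) + D (C.v * a) = D a := by
    have t1 := C.dml φ D hsur hadd hd h0 (C.u * a) (C.v * a) m_ua_u m_va_v
    rw [ha'] at t1
    exact t1.symm
  have s5 : D (C.u * b) + D (C.v * b) = D b := by
    have t1 := C.dml φ D hsur hadd hd h0 (C.u * b) (C.v * b) m_ub_u m_vb_v
    rw [hb'] at t1
    exact t1.symm
  rw [s1, s2, s3, ← s4, ← s5]
  abel

theorem daddthm (a b : R) : D (a + b) = D a + D b := by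
  have key1 : ∀ x : R, (D (a + b) - D a - D b) * (C.u * x * C.v) = 0 := by
    intro x
    rw [rkey C φ D hsur hadd hd h0]
    have htv : (C.u * x * C.v) * C.v = C.u * x * C.v := by rw [mul_assoc, C.hvv]
    have h1 : (a * (C.u * x * C.v)) * C.v = a * (C.u * x * C.v) := by
      rw [mul_assoc, htv]
    have h2 : (b * (C.u * x * C.v)) * C.v = b * (C.u * x * C.v) := by
      rw [mul_assoc, htv]
    rw [add_mul, C.d5 φ D hsur hadd hd h0 _ _ h1 h2]
    abel
  have key2 : ∀ x : R, (D (a + b) - D a - D b) * (C.v * x * C.u) = 0 := by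
    intro x
    rw [rkey C φ D hsur hadd hd h0]
    have htu : (C.v * x * C.u) * C.u = C.v * x * C.u := by rw [mul_assoc, C.huu]
    have h1 : (a * (C.v * x * C.u)) * C.u = a * (C.v * x * C.u) := by
      rw [mul_assoc, htu]
    have h2 : (b * (C.v * x * C.u)) * C.u = b * (C.v * x * C.u) := by
      rw [mul_assoc, htu]
    rw [add_mul, C.swap.d5 φ D hsur hadd hd h0 _ _ h1 h2]
    abel
  exact sub3 (C.master _ key1 key2)

end Der

end Ctx

end Stmt15Aux

theorem stmt15 {R : Type*} [Ring R] (hsemi : ∀ a : R, (∀ x : R, a * x * a = 0) → a = 0)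
(htf : ∀ a : R, 2 • a = 0 → a = 0)
(e : R) (he : e * e = e) (he0 : e ≠ 0) (he1 : e ≠ 1)
(E : Fin 2 → R) (hE0 : E 0 = e) (hE1 : E 1 = 1 - e)
(hB : ∀ (i j : Fin 2), i ≠ j → ∀ a : R, (∀ x : R, (E i * a * E i) * (E i * x * E j) = 0) → E i * a * E i = 0)
(φ : R → R) (hbij : Function.Bijective φ) (hmul : ∀ a b : R, φ (a * b) = φ a * φ b)
(D : R → R) (hD : ∀ a b : R, D (a * b) = D a * b + φ a * D b)
    : ∀ a b : R, D (a + b) = D a + D b := by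
  have hBu : ∀ a : R, (∀ x : R, (e * a * e) * (e * x * (1 - e)) = 0) → e * a * e = 0 := by
    intro a h
    have h2 := hB 0 1 (by decide) a (fun x => by rw [hE0, hE1]; exact h x)
    rwa [hE0] at h2
  have hBv : ∀ a : R, (∀ x : R, ((1 - e) * a * (1 - e)) * ((1 - e) * x * e) = 0) →
      (1 - e) * a * (1 - e) = 0 := by
    intro a h
    have h2 := hB 1 0 (by decide) a (fun x => by rw [hE0, hE1]; exact h x)
    rwa [hE1] at h2
  let C : Stmt15Aux.Ctx R :=
    { u := e
      v := 1 - e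
      huu := he
      hvv := by rw [sub_mul, one_mul, mul_sub, mul_one, he]; abel
      huv := by rw [mul_sub, mul_one, he, sub_self]
      hvu := by rw [sub_mul, one_mul, he, sub_self]
      hsum := by abel
      hsemi := hsemi
      hBu := hBu
      hBv := hBv }
  have hφ0 : φ 0 = 0 := Stmt15Aux.szero φ hbij.2 hmul
  have hφadd : ∀ a b : R, φ (a + b) = φ a + φ b := fun a b =>
    C.addt φ hbij.1 hbij.2 hmul hφ0 a b
  have hD0 : D 0 = 0 := by
    have := hD 0 0
    rw [mul_zero, mul_zero, hφ0, zero_mul, zero_add] at this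
    exact this
  intro a b
  exact C.daddthm φ D hbij.2 hφadd hD hD0 a b
end

section
/- Let g be a multiplicative generalized skew derivation on R with associated φ and D as above, where φ(e₁) + φ(e₂) = 1, D is additive, and D(1) = 0. Then g(e₁ + e₂) = g(e₁) + g(e₂). -/
theorem stmt17 {R : Type*} [Ring R] (e : R) (he : e * e = e) (he0 : e ≠ 0) (he1 : e ≠ 1)
(φ : R → R) (hbij : Function.Bijective φ) (hmul : ∀ a b : R, φ (a * b) = φ a * φ b)
    (hphi1 : φ 1 = 1)
    (hphie : φ e + φ (1 - e) = 1)
    (D : R → R) (hD : ∀ a b : R, D (a * b) = D a * b + φ a * D b)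
    (hDadd : ∀ a b : R, D (a + b) = D a + D b)
    (hD1 : D 1 = 0)
    (g : R → R) (hg : ∀ a b : R, g (a * b) = g a * b + φ a * D b)
    : g (e + (1 - e)) = g e + g (1 - e) := by
  have h1 : e + (1 - e) = 1 := by abel
  have hDe : D e + D (1 - e) = 0 := by
    rw [← hDadd, h1, hD1]
  have hge : g e = g 1 * e + D e := by
    have := hg 1 e; rwa [one_mul, hphi1, one_mul] at this
  have hge' : g (1 - e) = g 1 * (1 - e) + D (1 - e) := by
    have := hg 1 (1 - e); rwa [one_mul, hphi1, one_mul] at this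
  rw [h1, hge, hge']
  have : g 1 * e + D e + (g 1 * (1 - e) + D (1 - e)) = g 1 * (e + (1-e)) + (D e + D (1-e)) := by noncomm_ring
  rw [this, hDe, h1, mul_one, add_zero]
end

section
/- Let R be a 2-torsion free semiprime ring with identity and non-trivial idempotent e satisfying condition (B). Then every multiplicative generalized skew derivation g on R is additive, hence a generalized skew derivation. -/
namespace MGSD19

variable {R : Type*} [Ring R]

/-- corner element: left absorption -/
private lemma cl {p r a : R} (hp : p*p = p) (ha : p*a*r = a) : p*a = a := by
  rw [← ha, ← mul_assoc, ← mul_assoc, hp]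

private lemma cr {p r a : R} (hr : r*r = r) (ha : p*a*r = a) : a*r = a := by
  rw [← ha, mul_assoc, hr]

private lemma czl {p r a : R} (w : R) (hwp : w*p = 0) (ha : p*a*r = a) : w*a = 0 := by
  rw [← ha, ← mul_assoc, ← mul_assoc, hwp, zero_mul, zero_mul]

private lemma czr {p r a : R} (w : R) (hrw : r*w = 0) (ha : p*a*r = a) : a*w = 0 := by
  rw [← ha, mul_assoc, hrw, mul_zero]

private lemma corner_corner {p r c : R} (hp : p*p = p) (hr : r*r = r) :
    p*(p*c*r)*r = p*c*r := by
  rw [← mul_assoc, ← mul_assoc, hp, mul_assoc, hr]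

/-- M2, right version: column-separated additivity for a multiplicative bijection. -/
private lemma m2r (φ : R → R) (hinj : Function.Injective φ)
    (hsurj : Function.Surjective φ)
    (hmul : ∀ a b : R, φ (a * b) = φ a * φ b) (h0 : φ 0 = 0)
    (p q : R) (hpq1 : p + q = 1)
    (a b : R) (haq : a * q = 0) (hbp : b * p = 0) :
    φ (a + b) = φ a + φ b := by
  obtain ⟨s, hs⟩ := hsurj (φ a + φ b)
  have hap : a * p = a := by
    have h : a * (p + q) = a * 1 := by rw [hpq1]
    rw [mul_add, mul_one, haq, add_zero] at h; exact h
  have hbq : b * q = b := by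
    have h : b * (p + q) = b * 1 := by rw [hpq1]
    rw [mul_add, mul_one, hbp, zero_add] at h; exact h
  have h1 : s * p = a := by
    apply hinj
    rw [hmul, hs, add_mul, ← hmul, ← hmul, hap, hbp, h0, add_zero]
  have h2 : s * q = b := by
    apply hinj
    rw [hmul, hs, add_mul, ← hmul, ← hmul, haq, hbq, h0, zero_add]
  have h3 : s = a + b := by rw [← h1, ← h2, ← mul_add, hpq1, mul_one]
  rw [← h3, hs]

/-- M2, left version. -/
private lemma m2l (φ : R → R) (hinj : Function.Injective φ)
    (hsurj : Function.Surjective φ)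
    (hmul : ∀ a b : R, φ (a * b) = φ a * φ b) (h0 : φ 0 = 0)
    (p q : R) (hpq1 : p + q = 1)
    (a b : R) (hqa : q * a = 0) (hpb : p * b = 0) :
    φ (a + b) = φ a + φ b := by
  obtain ⟨s, hs⟩ := hsurj (φ a + φ b)
  have hpa : p * a = a := by
    have h : (p + q) * a = 1 * a := by rw [hpq1]
    rw [add_mul, one_mul, hqa, add_zero] at h; exact h
  have hqb : q * b = b := by
    have h : (p + q) * b = 1 * b := by rw [hpq1]
    rw [add_mul, one_mul, hpb, zero_add] at h; exact h
  have h1 : p * s = a := by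
    apply hinj
    rw [hmul, hs, mul_add, ← hmul, ← hmul, hpa, hpb, h0, add_zero]
  have h2 : q * s = b := by
    apply hinj
    rw [hmul, hs, mul_add, ← hmul, ← hmul, hqa, hqb, h0, zero_add]
  have h3 : s = a + b := by rw [← h1, ← h2, ← add_mul, hpq1, one_mul]
  rw [← h3, hs]

/-- M3: additivity of φ on the (p,q) off-diagonal corner. -/
private lemma m3 (φ : R → R) (hinj : Function.Injective φ)
    (hsurj : Function.Surjective φ)
    (hmul : ∀ a b : R, φ (a * b) = φ a * φ b) (h0 : φ 0 = 0)
    (p q : R) (hp : p*p = p) (hq : q*q = q) (hpq : p*q = 0) (hqp : q*p = 0)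
    (hpq1 : p + q = 1)
    (a b : R) (ha : p*a*q = a) (hb : p*b*q = b) :
    φ (a + b) = φ a + φ b := by
  have hpa : p*a = a := cl hp ha
  have hbq : b*q = b := cr hq hb
  have hbp : b*p = 0 := czr p hqp hb
  have hqa : q*a = 0 := czl q hqp ha
  have hba : b*a = 0 := czl b hbp ha
  have hfact : (p + b) * (a + q) = a + b := by
    have hexp : (p + b) * (a + q) = p*a + p*q + b*a + b*q := by noncomm_ring
    rw [hexp, hpa, hpq, hba, hbq, add_zero, add_zero]
  have h1 : φ (p + b) = φ p + φ b := m2r φ hinj hsurj hmul h0 p q hpq1 p b hpq hbp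
  have h2 : φ (a + q) = φ a + φ q := m2l φ hinj hsurj hmul h0 p q hpq1 a q hqa hpq
  have h3 : (φ p + φ b) * (φ a + φ q) = φ (p*a) + φ (p*q) + (φ (b*a) + φ (b*q)) := by
    rw [hmul, hmul, hmul, hmul]; noncomm_ring
  rw [← hfact, hmul, h1, h2, h3, hpa, hpq, hba, hbq, h0, add_zero, zero_add]

/-- M4: additivity of φ on the (p,p) diagonal corner (needs condition (B)). -/
private lemma m4 (φ : R → R) (hinj : Function.Injective φ)
    (hsurj : Function.Surjective φ)
    (hmul : ∀ a b : R, φ (a * b) = φ a * φ b) (h0 : φ 0 = 0)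
    (p q : R) (hp : p*p = p) (hq : q*q = q) (hpq : p*q = 0) (hqp : q*p = 0)
    (hpq1 : p + q = 1)
    (hB : ∀ t : R, (∀ x : R, (p*t*p) * (p*x*q) = 0) → p*t*p = 0)
    (a b : R) (ha : p*a*p = a) (hb : p*b*p = b) :
    φ (a + b) = φ a + φ b := by
  obtain ⟨s, hs⟩ := hsurj (φ a + φ b)
  have haq : a*q = 0 := czr q hpq ha
  have hbq : b*q = 0 := czr q hpq hb
  have hqa : q*a = 0 := czl q hqp ha
  have hqb : q*b = 0 := czl q hqp hb
  have hsq : s * q = 0 := by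
    apply hinj
    rw [hmul, hs, add_mul, ← hmul, ← hmul, haq, hbq, h0, add_zero]
  have hqs : q * s = 0 := by
    apply hinj
    rw [hmul, hs, mul_add, ← hmul, ← hmul, hqa, hqb, h0, add_zero]
  have hsp : s * p = s := by
    have h : s * (p + q) = s * 1 := by rw [hpq1]
    rw [mul_add, mul_one, hsq, add_zero] at h; exact h
  have hps : p * s = s := by
    have h : (p + q) * s = 1 * s := by rw [hpq1]
    rw [add_mul, one_mul, hqs, add_zero] at h; exact h
  have hpsp : p * s * p = s := by rw [hps, hsp]
  have hkey : ∀ x : R, (s - a - b) * (p*x*q) = 0 := by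
    intro x
    have hcorner : ∀ c : R, p*c*p = c → p*(c*(p*x*q))*q = c*(p*x*q) := by
      intro c hc
      have h1 : p*(c*(p*x*q)) = c*(p*x*q) := by rw [← mul_assoc, cl hp hc]
      have h2 : (p*x*q)*q = p*x*q := by rw [mul_assoc, hq]
      rw [h1, mul_assoc, h2]
    have hm3 : φ (a*(p*x*q) + b*(p*x*q)) = φ (a*(p*x*q)) + φ (b*(p*x*q)) :=
      m3 φ hinj hsurj hmul h0 p q hp hq hpq hqp hpq1 _ _ (hcorner a ha) (hcorner b hb)
    have h1 : s * (p*x*q) = a*(p*x*q) + b*(p*x*q) := by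
      apply hinj
      rw [hmul, hs, add_mul, ← hmul, ← hmul, hm3]
    rw [sub_mul, sub_mul, h1]
    abel
  have htc : p * (s - a - b) * p = s - a - b := by
    rw [mul_sub, mul_sub, sub_mul, sub_mul, hpsp, ha, hb]
  have ht : s - a - b = 0 := by
    rw [← htc]
    apply hB
    intro x
    rw [htc]
    exact hkey x
  have h3 : s = a + b := by
    have := sub_eq_zero.mp (by rw [sub_sub] at ht; exact ht)
    exact this
  rw [← h3, hs]

/-- φ is additive. -/
private lemma phi_add (φ : R → R) (hinj : Function.Injective φ)
    (hsurj : Function.Surjective φ)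
    (hmul : ∀ a b : R, φ (a * b) = φ a * φ b) (h0 : φ 0 = 0)
    (p q : R) (hp : p*p = p) (hq : q*q = q) (hpq : p*q = 0) (hqp : q*p = 0)
    (hpq1 : p + q = 1)
    (hBpq : ∀ t : R, (∀ x : R, (p*t*p) * (p*x*q) = 0) → p*t*p = 0)
    (hBqp : ∀ t : R, (∀ x : R, (q*t*q) * (q*x*p) = 0) → q*t*q = 0) :
    ∀ a b : R, φ (a + b) = φ a + φ b := by
  have hqp1 : q + p = 1 := by rw [add_comm]; exact hpq1
  -- decomposition of φ into corners
  have hdec : ∀ c : R, φ c = φ (p*c*p) + φ (q*c*p) + (φ (p*c*q) + φ (q*c*q)) := by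
    intro c
    have h1 : φ c = φ (c*p) + φ (c*q) := by
      have hs : c = c*p + c*q := by rw [← mul_add, hpq1, mul_one]
      conv_lhs => rw [hs]
      exact m2r φ hinj hsurj hmul h0 p q hpq1 (c*p) (c*q)
        (by rw [mul_assoc, hpq, mul_zero]) (by rw [mul_assoc, hqp, mul_zero])
    have h2 : φ (c*p) = φ (p*c*p) + φ (q*c*p) := by
      have hs : c*p = p*(c*p) + q*(c*p) := by rw [← add_mul, hpq1, one_mul]
      have hm := m2l φ hinj hsurj hmul h0 p q hpq1 (p*(c*p)) (q*(c*p))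
        (by rw [← mul_assoc, hqp, zero_mul]) (by rw [← mul_assoc, hpq, zero_mul])
      rw [← hs, ← mul_assoc, ← mul_assoc] at hm
      exact hm
    have h3 : φ (c*q) = φ (p*c*q) + φ (q*c*q) := by
      have hs : c*q = p*(c*q) + q*(c*q) := by rw [← add_mul, hpq1, one_mul]
      have hm := m2l φ hinj hsurj hmul h0 p q hpq1 (p*(c*q)) (q*(c*q))
        (by rw [← mul_assoc, hqp, zero_mul]) (by rw [← mul_assoc, hpq, zero_mul])
      rw [← hs, ← mul_assoc, ← mul_assoc] at hm
      exact hm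
    rw [h1, h2, h3]
  intro a b
  have cpp : φ (p*a*p + p*b*p) = φ (p*a*p) + φ (p*b*p) :=
    m4 φ hinj hsurj hmul h0 p q hp hq hpq hqp hpq1 hBpq _ _
      (corner_corner hp hp) (corner_corner hp hp)
  have cqq : φ (q*a*q + q*b*q) = φ (q*a*q) + φ (q*b*q) :=
    m4 φ hinj hsurj hmul h0 q p hq hp hqp hpq hqp1 hBqp _ _
      (corner_corner hq hq) (corner_corner hq hq)
  have cpq : φ (p*a*q + p*b*q) = φ (p*a*q) + φ (p*b*q) :=
    m3 φ hinj hsurj hmul h0 p q hp hq hpq hqp hpq1 _ _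
      (corner_corner hp hq) (corner_corner hp hq)
  have cqp : φ (q*a*p + q*b*p) = φ (q*a*p) + φ (q*b*p) :=
    m3 φ hinj hsurj hmul h0 q p hq hp hqp hpq hqp1 _ _
      (corner_corner hq hp) (corner_corner hq hp)
  have e1 : p*(a+b)*p = p*a*p + p*b*p := by noncomm_ring
  have e2 : q*(a+b)*p = q*a*p + q*b*p := by noncomm_ring
  have e3 : p*(a+b)*q = p*a*q + p*b*q := by noncomm_ring
  have e4 : q*(a+b)*q = q*a*q + q*b*q := by noncomm_ring
  rw [hdec (a+b), e1, e2, e3, e4, cpp, cqp, cpq, cqq, hdec a, hdec b]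
  abel

/-- DL2 right version. -/
private lemma dl2r (φ : R → R)
    (hadd : ∀ a b : R, φ (a + b) = φ a + φ b)
    (D : R → R) (hD : ∀ a b : R, D (a * b) = D a * b + φ a * D b) (hD0 : D 0 = 0)
    (p q : R) (hpq1 : p + q = 1)
    (a b : R) (haq : a * q = 0) (hbp : b * p = 0) :
    D (a + b) = D a + D b := by
  have hap : a * p = a := by
    have h : a * (p + q) = a * 1 := by rw [hpq1]
    rw [mul_add, mul_one, haq, add_zero] at h; exact h
  have hbq : b * q = b := by
    have h : b * (p + q) = b * 1 := by rw [hpq1]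
    rw [mul_add, mul_one, hbp, zero_add] at h; exact h
  have habp : (a+b)*p = a := by rw [add_mul, hap, hbp, add_zero]
  have habq : (a+b)*q = b := by rw [add_mul, haq, hbq, zero_add]
  -- D(a+b)*p = D a * p + D b * p
  have e1 : D a = D (a+b) * p + φ (a+b) * D p := by
    have h := hD (a+b) p; rw [habp] at h; exact h
  have e2 : D a = D a * p + φ a * D p := by
    have h := hD a p; rw [hap] at h; exact h
  have e3 : (0:R) = D b * p + φ b * D p := by
    have h := hD b p; rw [hbp, hD0] at h; exact h
  have f1 : D b = D (a+b) * q + φ (a+b) * D q := by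
    have h := hD (a+b) q; rw [habq] at h; exact h
  have f2 : D b = D b * q + φ b * D q := by
    have h := hD b q; rw [hbq] at h; exact h
  have f3 : (0:R) = D a * q + φ a * D q := by
    have h := hD a q; rw [haq, hD0] at h; exact h
  have hab : φ (a+b) = φ a + φ b := hadd a b
  have hp' : D (a+b) * p = D a * p + D b * p := by
    have h : D (a+b) * p + φ (a+b) * D p = (D a * p + D b * p) + φ (a+b) * D p := by
      rw [← e1, hab, add_mul]
      calc D a = (D a * p + φ a * D p) + 0 := by rw [← e2, add_zero]
        _ = (D a * p + φ a * D p) + (D b * p + φ b * D p) := by rw [← e3]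
        _ = D a * p + D b * p + (φ a * D p + φ b * D p) := by abel
    exact add_right_cancel h
  have hq' : D (a+b) * q = D a * q + D b * q := by
    have h : D (a+b) * q + φ (a+b) * D q = (D a * q + D b * q) + φ (a+b) * D q := by
      rw [← f1, hab, add_mul]
      calc D b = 0 + (D b * q + φ b * D q) := by rw [← f2, zero_add]
        _ = (D a * q + φ a * D q) + (D b * q + φ b * D q) := by rw [← f3]
        _ = D a * q + D b * q + (φ a * D q + φ b * D q) := by abel
    exact add_right_cancel h
  have : D (a+b) * p + D (a+b) * q = (D a * p + D a * q) + (D b * p + D b * q) := by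
    rw [hp', hq']; abel
  rw [← mul_add, ← mul_add, ← mul_add, hpq1, mul_one, mul_one, mul_one] at this
  exact this

/-- DL2 left version. -/
private lemma dl2l (φ : R → R) (h1' : φ 1 = 1)
    (hadd : ∀ a b : R, φ (a + b) = φ a + φ b)
    (D : R → R) (hD : ∀ a b : R, D (a * b) = D a * b + φ a * D b) (hD0 : D 0 = 0)
    (p q : R) (hpq1 : p + q = 1)
    (a b : R) (hqa : q * a = 0) (hpb : p * b = 0) :
    D (a + b) = D a + D b := by
  have hpa : p * a = a := by
    have h : (p + q) * a = 1 * a := by rw [hpq1]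
    rw [add_mul, one_mul, hqa, add_zero] at h; exact h
  have hqb : q * b = b := by
    have h : (p + q) * b = 1 * b := by rw [hpq1]
    rw [add_mul, one_mul, hpb, zero_add] at h; exact h
  have hpab : p*(a+b) = a := by rw [mul_add, hpa, hpb, add_zero]
  have hqab : q*(a+b) = b := by rw [mul_add, hqa, hqb, zero_add]
  have e1 : D a = D p * (a+b) + φ p * D (a+b) := by
    have h := hD p (a+b); rw [hpab] at h; exact h
  have e2 : D a = D p * a + φ p * D a := by
    have h := hD p a; rw [hpa] at h; exact h
  have e3 : (0:R) = D p * b + φ p * D b := by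
    have h := hD p b; rw [hpb, hD0] at h; exact h
  have f1 : D b = D q * (a+b) + φ q * D (a+b) := by
    have h := hD q (a+b); rw [hqab] at h; exact h
  have f2 : D b = D q * b + φ q * D b := by
    have h := hD q b; rw [hqb] at h; exact h
  have f3 : (0:R) = D q * a + φ q * D a := by
    have h := hD q a; rw [hqa, hD0] at h; exact h
  have hp' : φ p * D (a+b) = φ p * D a + φ p * D b := by
    have h : D p * (a+b) + φ p * D (a+b)
        = D p * (a+b) + (φ p * D a + φ p * D b) := by
      rw [← e1, mul_add]
      calc D a = (D p * a + φ p * D a) + 0 := by rw [← e2, add_zero]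
        _ = (D p * a + φ p * D a) + (D p * b + φ p * D b) := by rw [← e3]
        _ = D p * a + D p * b + (φ p * D a + φ p * D b) := by abel
    exact add_left_cancel h
  have hq' : φ q * D (a+b) = φ q * D a + φ q * D b := by
    have h : D q * (a+b) + φ q * D (a+b)
        = D q * (a+b) + (φ q * D a + φ q * D b) := by
      rw [← f1, mul_add]
      calc D b = 0 + (D q * b + φ q * D b) := by rw [← f2, zero_add]
        _ = (D q * a + φ q * D a) + (D q * b + φ q * D b) := by rw [← f3]
        _ = D q * a + D q * b + (φ q * D a + φ q * D b) := by abel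
    exact add_left_cancel h
  have hsum : (φ p + φ q) * D (a+b) = (φ p + φ q) * D a + (φ p + φ q) * D b := by
    rw [add_mul, add_mul, add_mul, hp', hq']; abel
  rw [← hadd, hpq1, h1', one_mul, one_mul, one_mul] at hsum
  exact hsum

/-- DL3: additivity of D on the (p,q) corner. -/
private lemma dl3 (φ : R → R) (h1' : φ 1 = 1)
    (hadd : ∀ a b : R, φ (a + b) = φ a + φ b)
    (D : R → R) (hD : ∀ a b : R, D (a * b) = D a * b + φ a * D b) (hD0 : D 0 = 0)
    (p q : R) (hp : p*p = p) (hq : q*q = q) (hpq : p*q = 0) (hqp : q*p = 0)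
    (hpq1 : p + q = 1)
    (a b : R) (ha : p*a*q = a) (hb : p*b*q = b) :
    D (a + b) = D a + D b := by
  have hpa : p*a = a := cl hp ha
  have hbq : b*q = b := cr hq hb
  have hbp : b*p = 0 := czr p hqp hb
  have hqa : q*a = 0 := czl q hqp ha
  have hba : b*a = 0 := czl b hbp ha
  have hfact : (p + b) * (a + q) = a + b := by
    have hexp : (p + b) * (a + q) = p*a + p*q + b*a + b*q := by noncomm_ring
    rw [hexp, hpa, hpq, hba, hbq, add_zero, add_zero]
  have h1 : D (p + b) = D p + D b :=
    dl2r φ hadd D hD hD0 p q hpq1 p b hpq hbp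
  have h2 : D (a + q) = D a + D q :=
    dl2l φ h1' hadd D hD hD0 p q hpq1 a q hqa hpq
  have h3 : φ (p + b) = φ p + φ b := hadd p b
  calc D (a + b) = D ((p+b) * (a+q)) := by rw [hfact]
    _ = D (p+b) * (a+q) + φ (p+b) * D (a+q) := hD _ _
    _ = (D p + D b) * (a+q) + (φ p + φ b) * (D a + D q) := by rw [h1, h2, h3]
    _ = (D p * a + φ p * D a) + (D p * q + φ p * D q)
        + ((D b * a + φ b * D a) + (D b * q + φ b * D q)) := by noncomm_ring
    _ = D (p*a) + D (p*q) + (D (b*a) + D (b*q)) := by rw [hD, hD, hD, hD]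
    _ = D a + D b := by rw [hpa, hpq, hba, hbq, hD0, add_zero, zero_add]

/-- DL4: additivity of D on the (p,p) corner. -/
private lemma dl4 (φ : R → R) (h1' : φ 1 = 1)
    (hadd : ∀ a b : R, φ (a + b) = φ a + φ b)
    (D : R → R) (hD : ∀ a b : R, D (a * b) = D a * b + φ a * D b) (hD0 : D 0 = 0)
    (hsemi : ∀ a : R, (∀ x : R, a * x * a = 0) → a = 0)
    (p q : R) (hp : p*p = p) (hq : q*q = q) (hpq : p*q = 0) (hqp : q*p = 0)
    (hpq1 : p + q = 1)
    (hB : ∀ t : R, (∀ x : R, (p*t*p) * (p*x*q) = 0) → p*t*p = 0)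
    (a b : R) (ha : p*a*p = a) (hb : p*b*p = b) :
    D (a + b) = D a + D b := by
  set ε := D (a+b) - D a - D b with hε
  have haq : a*q = 0 := czr q hpq ha
  have hbq : b*q = 0 := czr q hpq hb
  have hab : φ (a+b) = φ a + φ b := hadd a b
  have hεq : ε * q = 0 := by
    have e1 : (0:R) = D (a+b) * q + φ (a+b) * D q := by
      have h := hD (a+b) q
      rw [add_mul, haq, hbq, add_zero, hD0] at h; exact h
    have e2 : (0:R) = D a * q + φ a * D q := by
      have h := hD a q; rw [haq, hD0] at h; exact h
    have e3 : (0:R) = D b * q + φ b * D q := by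
      have h := hD b q; rw [hbq, hD0] at h; exact h
    have : D (a+b) * q = D a * q + D b * q := by
      have h : D (a+b) * q + φ (a+b) * D q = (D a * q + D b * q) + φ (a+b) * D q := by
        rw [← e1, hab, add_mul]
        calc (0:R) = (D a * q + φ a * D q) + (D b * q + φ b * D q) := by
              rw [← e2, ← e3, add_zero]
          _ = D a * q + D b * q + (φ a * D q + φ b * D q) := by abel
      exact add_right_cancel h
    rw [hε, sub_mul, sub_mul, this]; abel
  have hεZ : ∀ x : R, ε * (p*x*q) = 0 := by
    intro x
    have hcorner : ∀ c : R, p*c*p = c → p*(c*(p*x*q))*q = c*(p*x*q) := by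
      intro c hc
      have h1 : p*(c*(p*x*q)) = c*(p*x*q) := by rw [← mul_assoc, cl hp hc]
      have h2 : (p*x*q)*q = p*x*q := by rw [mul_assoc, hq]
      rw [h1, mul_assoc, h2]
    have hdl3 : D (a*(p*x*q) + b*(p*x*q)) = D (a*(p*x*q)) + D (b*(p*x*q)) :=
      dl3 φ h1' hadd D hD hD0 p q hp hq hpq hqp hpq1 _ _ (hcorner a ha) (hcorner b hb)
    have e1 : D (a*(p*x*q)) + D (b*(p*x*q))
        = D (a+b) * (p*x*q) + φ (a+b) * D (p*x*q) := by
      have h := hD (a+b) (p*x*q)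
      rw [add_mul] at h
      rw [← hdl3]; exact h
    have e2 : D (a*(p*x*q)) = D a * (p*x*q) + φ a * D (p*x*q) := hD a _
    have e3 : D (b*(p*x*q)) = D b * (p*x*q) + φ b * D (p*x*q) := hD b _
    have : D (a+b) * (p*x*q) = D a * (p*x*q) + D b * (p*x*q) := by
      have h : (D a * (p*x*q) + D b * (p*x*q)) + φ (a+b) * D (p*x*q)
          = D (a+b) * (p*x*q) + φ (a+b) * D (p*x*q) := by
        rw [← e1, e2, e3, hab, add_mul]; abel
      exact add_right_cancel h.symm
    rw [hε, sub_mul, sub_mul, this]; abel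
  have hpεp : p * ε * p = 0 := by
    apply hB
    intro x
    have h1 : p * ε * p * (p*x*q) = p * (ε * (p*x*q)) := by
      calc p * ε * p * (p*x*q) = p * (ε * (p * (p*x*q))) := by
            rw [mul_assoc, mul_assoc]
        _ = p * (ε * (p*x*q)) := by
            rw [show p*(p*x*q) = p*x*q from by rw [← mul_assoc, ← mul_assoc, hp]]
    rw [h1, hεZ x, mul_zero]
  have hεp : ε * p = ε := by
    have h : ε * (p + q) = ε * 1 := by rw [hpq1]
    rw [mul_add, mul_one, hεq, add_zero] at h; exact h
  have hpε : p * ε = 0 := by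
    rw [← hεp, ← mul_assoc, hpεp]
  have hqε : q * ε = ε := by
    have h : (p + q) * ε = 1 * ε := by rw [hpq1]
    rw [add_mul, one_mul, hpε, zero_add] at h; exact h
  have hzero : ε = 0 := by
    apply hsemi
    intro z
    have h1 : ε * z * ε = ε * (p*z*q) * ε := by
      calc ε * z * ε = (ε * p) * z * (q * ε) := by rw [hεp, hqε]
        _ = ε * (p*z*q) * ε := by noncomm_ring
    rw [h1, hεZ z, zero_mul]
  rw [hε] at hzero
  have := sub_eq_zero.mp (by rw [sub_sub] at hzero; exact hzero)
  exact this

/-- D is additive. -/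
private lemma d_add (φ : R → R) (h1' : φ 1 = 1)
    (hadd : ∀ a b : R, φ (a + b) = φ a + φ b)
    (D : R → R) (hD : ∀ a b : R, D (a * b) = D a * b + φ a * D b) (hD0 : D 0 = 0)
    (hsemi : ∀ a : R, (∀ x : R, a * x * a = 0) → a = 0)
    (p q : R) (hp : p*p = p) (hq : q*q = q) (hpq : p*q = 0) (hqp : q*p = 0)
    (hpq1 : p + q = 1)
    (hBpq : ∀ t : R, (∀ x : R, (p*t*p) * (p*x*q) = 0) → p*t*p = 0)
    (hBqp : ∀ t : R, (∀ x : R, (q*t*q) * (q*x*p) = 0) → q*t*q = 0) :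
    ∀ a b : R, D (a + b) = D a + D b := by
  have hqp1 : q + p = 1 := by rw [add_comm]; exact hpq1
  have hdec : ∀ c : R, D c = D (p*c*p) + D (q*c*p) + (D (p*c*q) + D (q*c*q)) := by
    intro c
    have h1 : D c = D (c*p) + D (c*q) := by
      have hs : c = c*p + c*q := by rw [← mul_add, hpq1, mul_one]
      conv_lhs => rw [hs]
      exact dl2r φ hadd D hD hD0 p q hpq1 (c*p) (c*q)
        (by rw [mul_assoc, hpq, mul_zero]) (by rw [mul_assoc, hqp, mul_zero])
    have h2 : D (c*p) = D (p*c*p) + D (q*c*p) := by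
      have hs : c*p = p*(c*p) + q*(c*p) := by rw [← add_mul, hpq1, one_mul]
      have hm := dl2l φ h1' hadd D hD hD0 p q hpq1 (p*(c*p)) (q*(c*p))
        (by rw [← mul_assoc, hqp, zero_mul]) (by rw [← mul_assoc, hpq, zero_mul])
      rw [← hs, ← mul_assoc, ← mul_assoc] at hm
      exact hm
    have h3 : D (c*q) = D (p*c*q) + D (q*c*q) := by
      have hs : c*q = p*(c*q) + q*(c*q) := by rw [← add_mul, hpq1, one_mul]
      have hm := dl2l φ h1' hadd D hD hD0 p q hpq1 (p*(c*q)) (q*(c*q))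
        (by rw [← mul_assoc, hqp, zero_mul]) (by rw [← mul_assoc, hpq, zero_mul])
      rw [← hs, ← mul_assoc, ← mul_assoc] at hm
      exact hm
    rw [h1, h2, h3]
  intro a b
  have cpp : D (p*a*p + p*b*p) = D (p*a*p) + D (p*b*p) :=
    dl4 φ h1' hadd D hD hD0 hsemi p q hp hq hpq hqp hpq1 hBpq _ _
      (corner_corner hp hp) (corner_corner hp hp)
  have cqq : D (q*a*q + q*b*q) = D (q*a*q) + D (q*b*q) :=
    dl4 φ h1' hadd D hD hD0 hsemi q p hq hp hqp hpq hqp1 hBqp _ _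
      (corner_corner hq hq) (corner_corner hq hq)
  have cpq : D (p*a*q + p*b*q) = D (p*a*q) + D (p*b*q) :=
    dl3 φ h1' hadd D hD hD0 p q hp hq hpq hqp hpq1 _ _
      (corner_corner hp hq) (corner_corner hp hq)
  have cqp : D (q*a*p + q*b*p) = D (q*a*p) + D (q*b*p) :=
    dl3 φ h1' hadd D hD hD0 q p hq hp hqp hpq hqp1 _ _
      (corner_corner hq hp) (corner_corner hq hp)
  have e1 : p*(a+b)*p = p*a*p + p*b*p := by noncomm_ring
  have e2 : q*(a+b)*p = q*a*p + q*b*p := by noncomm_ring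
  have e3 : p*(a+b)*q = p*a*q + p*b*q := by noncomm_ring
  have e4 : q*(a+b)*q = q*a*q + q*b*q := by noncomm_ring
  rw [hdec (a+b), e1, e2, e3, e4, cpp, cqp, cpq, cqq, hdec a, hdec b]
  abel

end MGSD19

theorem stmt19 {R : Type*} [Ring R] (hsemi : ∀ a : R, (∀ x : R, a * x * a = 0) → a = 0)
(htf : ∀ a : R, 2 • a = 0 → a = 0)
(e : R) (he : e * e = e) (he0 : e ≠ 0) (he1 : e ≠ 1)
(E : Fin 2 → R) (hE0 : E 0 = e) (hE1 : E 1 = 1 - e)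
(hB : ∀ (i j : Fin 2), i ≠ j → ∀ a : R, (∀ x : R, (E i * a * E i) * (E i * x * E j) = 0) → E i * a * E i = 0)
(φ : R → R) (hbij : Function.Bijective φ) (hmul : ∀ a b : R, φ (a * b) = φ a * φ b)
(D : R → R) (hD : ∀ a b : R, D (a * b) = D a * b + φ a * D b)
(g : R → R) (hg : ∀ a b : R, g (a * b) = g a * b + φ a * D b)
    : ∀ a b : R, g (a + b) = g a + g b := by
  obtain ⟨hinj, hsurj⟩ := hbij
  -- basic facts about φ
  have h0 : φ 0 = 0 := by
    obtain ⟨x, hx⟩ := hsurj 0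
    have h := hmul 0 x
    rw [zero_mul, hx, mul_zero] at h
    exact h
  have h1' : φ 1 = 1 := by
    obtain ⟨x, hx⟩ := hsurj 1
    have h := hmul 1 x
    rw [one_mul, hx, mul_one] at h
    exact h.symm
  -- idempotent pair
  set p := e with hpdef
  set q := 1 - e with hqdef
  have hp : p*p = p := he
  have hpq1 : p + q = 1 := by rw [hpdef, hqdef]; abel
  have hpq : p*q = 0 := by rw [hpdef, hqdef, mul_sub, mul_one, he, sub_self]
  have hqp : q*p = 0 := by rw [hpdef, hqdef, sub_mul, one_mul, he, sub_self]
  have hq : q*q = q := by rw [hqdef, mul_sub, mul_one, sub_mul, one_mul, he, sub_self, sub_zero]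
  have hBpq : ∀ t : R, (∀ x : R, (p*t*p) * (p*x*q) = 0) → p*t*p = 0 := by
    intro t ht
    have h := hB 0 1 (by decide) t
    rw [hE0, hE1] at h
    exact h ht
  have hBqp : ∀ t : R, (∀ x : R, (q*t*q) * (q*x*p) = 0) → q*t*q = 0 := by
    intro t ht
    have h := hB 1 0 (by decide) t
    rw [hE0, hE1] at h
    exact h ht
  have hadd : ∀ a b : R, φ (a + b) = φ a + φ b :=
    MGSD19.phi_add φ hinj hsurj hmul h0 p q hp hq hpq hqp hpq1 hBpq hBqp
  have hD0 : D 0 = 0 := by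
    have h := hD 0 0
    rw [mul_zero, mul_zero, h0, zero_mul, zero_add] at h
    exact h
  have hDadd : ∀ a b : R, D (a + b) = D a + D b :=
    MGSD19.d_add φ h1' hadd D hD hD0 hsemi p q hp hq hpq hqp hpq1 hBpq hBqp
  have hg1 : ∀ x : R, g x = g 1 * x + D x := by
    intro x
    have h := hg 1 x
    rw [one_mul, h1', one_mul] at h
    exact h
  intro a b
  rw [hg1 (a+b), hg1 a, hg1 b, hDadd, mul_add]
  abel
end
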